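/- arXiv:2204.08827 — 3 statements merged into one kernel-verified Lean document; each statement's English description precedes it below -/
import Mathlib

section
/- Under Assumptions (B1)–(B4), there exists a constant C > 0, depending only on Y(0), φ, ψ, the drift b (through c1, c2, p, y_*, γ), λ and T (in particular not on Z, Λ or N), such that for every noise path Z with Hölder constant Λ and every N with c3·Δ_N < 1, the drift-implicit Euler scheme satisfies |Ŷ(t_k) − Ŷ(t_n)| ≤ C·(1 + Λ^{max{p, γλ+λ−1}/(γλ+λ−1)})·|t_k − t_n|^λ for all k, n = 0, 1, …, N. -/
/-!
Near the lower boundary, within distance `2ε`, the drift is at least `κ = c₂ / (2ε)^γ`.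
Along an excursion of length `τ` into that strip the scheme therefore gains at least `κ τ`,
while the noise and the boundary move it by at most `(Λ + K) τ^λ`, which weighted AM-GM bounds
by `κ τ + ε` as soon as `Λ + K ≤ κ^λ ε^(1-λ)`. Since `κ^λ ε^(1-λ)` scales like `ε^(-(γλ+λ-1))`
and `γλ + λ - 1 > 0`, this is achieved with `ε ≍ max 1 Λ ^ (-1/(γλ+λ-1))`, so an excursion that
starts at distance `2ε` never gets closer than `ε`; the same holds at the upper boundary by
reflection. At distance `ε/2` from the boundaries (B2) bounds the drift by `O(ε^(-p))`, and
summing the scheme gives increments `O(ε^(-p) τ + Λ τ^λ)`.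
-/

open Finset

theorem le_of_excursion_drop_le {d : ℕ → ℝ} {N : ℕ} {ε : ℝ} (hε : 0 ≤ ε) (h0 : 2 * ε ≤ d 0)
    (hdrop : ∀ j k, j < k → k ≤ N → (∀ i, j < i → i ≤ k → d i < 2 * ε) → d j - ε ≤ d k) :
    ∀ k ≤ N, ε ≤ d k := by
  classical
  intro k hk
  set j := Nat.findGreatest (fun i => 2 * ε ≤ d i) k
  have hj : 2 * ε ≤ d j := Nat.findGreatest_spec (P := fun i => 2 * ε ≤ d i) (Nat.zero_le k) h0
  rcases (Nat.findGreatest_le k : j ≤ k).eq_or_lt with hjk | hjk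
  · rw [← hjk]; linarith
  · have := hdrop j k hjk hk fun i hji hik => not_le.mp (Nat.findGreatest_is_greatest hji hik)
    linarith

theorem card_Ico_mul_eq_sub {j k : ℕ} {h : ℝ} (hjk : j ≤ k) :
    ((Ico j k).card : ℝ) * h = k * h - j * h := by
  rw [Nat.card_Ico, Nat.cast_sub hjk]; ring

theorem natCast_mul_div_mem_Icc {T : ℝ} {i N : ℕ} (hT : 0 ≤ T) (hN : 0 < N) (hi : i ≤ N) :
    (i : ℝ) * (T / N) ∈ Set.Icc 0 T := by
  refine ⟨by positivity, ?_⟩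
  rw [mul_div_left_comm]
  exact mul_le_of_le_one_right hT (div_le_one_of_le₀ (by exact_mod_cast hi) (Nat.cast_nonneg _))

theorem exponent_pos_of_one_div_sub_one_lt {lam gam : ℝ} (hlam0 : 0 < lam) (hlam1 : lam < 1)
    (hgam : 1 / lam - 1 < gam) : 0 < gam ∧ 0 < gam * lam + lam - 1 := by
  have : 1 / lam * lam = 1 := by field_simp
  have hθ : 0 < gam * lam + lam - 1 := by nlinarith
  exact ⟨by nlinarith, hθ⟩

theorem exists_pos_two_mul_le {x y z : ℝ} (hx : 0 < x) (hy : 0 < y) (hz : 0 < z) :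
    ∃ A, 0 < A ∧ 2 * A ≤ x ∧ 2 * A ≤ y ∧ 2 * A ≤ z :=
  ⟨min (min x y) z / 2, by positivity, by linarith [min_le_left (min x y) z, min_le_left x y],
    by linarith [min_le_left (min x y) z, min_le_right x y], by linarith [min_le_right (min x y) z]⟩

theorem mul_rpow_le_mul_add {L κ ε τ lam : ℝ} (hlam0 : 0 ≤ lam) (hlam1 : lam ≤ 1) (hκ : 0 ≤ κ)
    (hε : 0 ≤ ε) (hτ : 0 ≤ τ) (hL : L ≤ κ ^ lam * ε ^ (1 - lam)) :
    L * τ ^ lam ≤ κ * τ + ε := by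
  have hκτ : 0 ≤ κ * τ := mul_nonneg hκ hτ
  calc L * τ ^ lam ≤ κ ^ lam * ε ^ (1 - lam) * τ ^ lam := by gcongr
    _ = (κ * τ) ^ lam * ε ^ (1 - lam) := by rw [Real.mul_rpow hκ hτ]; ring
    _ ≤ lam * (κ * τ) + (1 - lam) * ε :=
        Real.geom_mean_le_arith_mean2_weighted hlam0 (by linarith) hκτ hε (by ring)
    _ ≤ κ * τ + ε := by nlinarith

theorem max_one_rpow_le_one_add_rpow {x s q : ℝ} (hx : 0 ≤ x) (hsq : s ≤ q) :
    max 1 x ^ s ≤ 1 + x ^ q := by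
  refine (Real.rpow_le_rpow_of_exponent_le (le_max_left _ _) hsq).trans ?_
  rcases le_total x 1 with hx1 | hx1
  · rw [max_eq_left hx1, Real.one_rpow]; linarith [Real.rpow_nonneg hx q]
  · rw [max_eq_right hx1]; linarith

/-- With `κ = c / (2ε)^γ`, the least drift (B3) allows at distance `< 2ε` from the boundary,
`mul_rpow_le_mul_add` gives `L τ^λ ≤ κ τ + ε` for every `L ≤ repulsionGain c γ lam ε`. -/
noncomputable def repulsionGain (c γ lam ε : ℝ) : ℝ :=
  (c / (2 * ε) ^ γ) ^ lam * ε ^ (1 - lam)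

theorem repulsionGain_div {c γ lam E σ : ℝ} (hc : 0 ≤ c) (hE : 0 < E) (hσ : 0 < σ) :
    repulsionGain c γ lam (E / σ) = repulsionGain c γ lam E * σ ^ (γ * lam + lam - 1) := by
  have h2E : 0 < 2 * E := by positivity
  rw [repulsionGain, repulsionGain, show 2 * (E / σ) = 2 * E / σ by ring,
    Real.div_rpow h2E.le hσ.le, div_div_eq_mul_div, mul_div_right_comm,
    Real.mul_rpow (by positivity) (Real.rpow_nonneg hσ.le _), Real.div_rpow hE.le hσ.le,
    ← Real.rpow_mul hσ.le, show γ * lam + lam - 1 = γ * lam - (1 - lam) by ring,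
    Real.rpow_sub hσ (γ * lam) (1 - lam)]
  ring

theorem exists_repulsionGain_ge {A c K γ lam c1 p : ℝ} (hA : 0 < A) (hc : 0 < c) (hK : 0 ≤ K)
    (hc1 : 0 ≤ c1) (hθ : 0 < γ * lam + lam - 1) :
    ∃ a ≥ 0, ∀ Λ ≥ 0, ∃ ε, 0 < ε ∧ ε ≤ A ∧ Λ + K ≤ repulsionGain c γ lam ε ∧
      c1 / (ε / 2) ^ p ≤ a * max 1 Λ ^ (p / (γ * lam + lam - 1)) := by
  set θ := γ * lam + lam - 1
  set g := repulsionGain c γ lam A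
  have hg : 0 < g := by unfold g repulsionGain; positivity
  set a0 := max 1 ((1 + K) / g)
  have ha0 : 1 ≤ a0 := le_max_left _ _
  refine ⟨c1 * a0 ^ (p / θ) / (A / 2) ^ p, by positivity, fun Λ hΛ => ?_⟩
  set m := max 1 Λ
  have hm : 1 ≤ m := le_max_left _ _
  -- `ε = A / σ` with `σ^θ = a0 * m`, so that the gain at `ε` is `g * a0 * m ≥ (1 + K) * m`
  set σ := (a0 * m) ^ θ⁻¹
  have hσ : 1 ≤ σ := Real.one_le_rpow (one_le_mul_of_one_le_of_one_le ha0 hm) (by positivity)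
  have hσθ : σ ^ θ = a0 * m := Real.rpow_inv_rpow (by positivity) hθ.ne'
  refine ⟨A / σ, by positivity, div_le_self hA.le hσ, ?_, ?_⟩
  · rw [repulsionGain_div hc.le hA (by positivity), hσθ]
    have : (1 + K) / g * g ≤ a0 * g := by gcongr; exact le_max_right _ _
    rw [div_mul_cancel₀ _ hg.ne'] at this
    nlinarith [le_max_right 1 Λ]
  · have hσp : σ ^ p = a0 ^ (p / θ) * m ^ (p / θ) := by
      rw [← Real.mul_rpow (by positivity) (by positivity), ← Real.rpow_mul (by positivity),
        inv_mul_eq_div]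
    rw [div_right_comm, Real.div_rpow (by positivity) (by positivity), div_div_eq_mul_div, hσp]
    exact le_of_eq (by ring)

theorem add_mul_add_le_mul_one_add_rpow {B X a W S Λ s q : ℝ} (hB : 0 ≤ B) (hW : 0 ≤ W)
    (hS : 0 ≤ S) (hΛ : 0 ≤ Λ) (ha : 0 ≤ a) (hX : X ≤ a * max 1 Λ ^ s) (hsq : s ≤ q)
    (hq : 1 ≤ q) :
    (B + X * W) * S + Λ ≤ ((B + a * W) * S + 1) * (1 + Λ ^ q) := by
  set R := 1 + Λ ^ q
  have hR : 1 ≤ R := by linarith [Real.rpow_nonneg hΛ q]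
  have hΛR : Λ ≤ R := by
    have := max_one_rpow_le_one_add_rpow hΛ hq
    rw [Real.rpow_one] at this
    exact (le_max_right 1 Λ).trans this
  have hXR : X ≤ a * R := hX.trans (by gcongr; exact max_one_rpow_le_one_add_rpow hΛ hsq)
  have hBR : B ≤ B * R := le_mul_of_one_le_right hB hR
  calc (B + X * W) * S + Λ ≤ (B * R + a * R * W) * S + R := by gcongr
    _ = ((B + a * W) * S + 1) * R := by ring

def IsHolderOnIcc (K lam T : ℝ) (f : ℝ → ℝ) : Prop :=
  ∀ s ∈ Set.Icc (0 : ℝ) T, ∀ t ∈ Set.Icc (0 : ℝ) T, |f t - f s| ≤ K * |t - s| ^ lam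

section Holder

variable {K lam T : ℝ} {f g : ℝ → ℝ}

theorem abs_sub_rpow_le {s t : ℝ} (hlam : 0 ≤ lam) (hs : s ∈ Set.Icc 0 T) (ht : t ∈ Set.Icc 0 T) :
    |t - s| ^ lam ≤ T ^ lam :=
  Real.rpow_le_rpow (abs_nonneg _)
    (abs_sub_le_iff.2 ⟨by linarith [hs.1, ht.2], by linarith [hs.2, ht.1]⟩) hlam

theorem IsHolderOnIcc.abs_sub_le (hf : IsHolderOnIcc K lam T f) (hK : 0 ≤ K) (hlam : 0 ≤ lam)
    {s t : ℝ} (hs : s ∈ Set.Icc 0 T) (ht : t ∈ Set.Icc 0 T) : |f t - f s| ≤ K * T ^ lam :=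
  (hf s hs t ht).trans (mul_le_mul_of_nonneg_left (abs_sub_rpow_le hlam hs ht) hK)

theorem sub_le_iSup_abs_sub (hT : 0 ≤ T) (hK : 0 ≤ K) (hlam : 0 ≤ lam)
    (hf : IsHolderOnIcc K lam T f) (hg : IsHolderOnIcc K lam T g) :
    g 0 - f 0 ≤ ⨆ t : Set.Icc (0 : ℝ) T, |g t - f t| := by
  have h0 : (0 : ℝ) ∈ Set.Icc 0 T := ⟨le_rfl, hT⟩
  have hbdd : BddAbove (Set.range fun t : Set.Icc (0 : ℝ) T => |g t - f t|) := by
    refine ⟨|g 0 - f 0| + 2 * (K * T ^ lam), ?_⟩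
    rintro _ ⟨t, rfl⟩
    have hgt := hg.abs_sub_le hK hlam h0 t.2
    have hft := hf.abs_sub_le hK hlam t.2 h0
    calc |g t - f t| = |(g t - g 0) + (g 0 - f 0) + (f 0 - f t)| := by ring_nf
      _ ≤ |g t - g 0| + |g 0 - f 0| + |f 0 - f t| := abs_add_three _ _ _
      _ ≤ _ := by linarith
  exact (le_abs_self _).trans (le_ciSup hbdd (⟨0, h0⟩ : Set.Icc (0 : ℝ) T))

end Holder

def IsImplicitEuler (b : ℝ → ℝ → ℝ) (Z : ℝ → ℝ) (h : ℝ) (N : ℕ) (Y : ℕ → ℝ) : Prop :=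
  ∀ k < N, Y (k + 1) = Y k + b (↑(k + 1) * h) (Y (k + 1)) * h + (Z (↑(k + 1) * h) - Z (k * h))

namespace IsImplicitEuler

variable {b : ℝ → ℝ → ℝ} {Z φ ψ : ℝ → ℝ} {h T lam K Λ c2 γ ystar ε : ℝ} {N : ℕ} {Y : ℕ → ℝ}

theorem of_forall_lt {T : ℝ}
    (hsch : ∀ k : ℕ, k < N →
      φ (((k : ℝ) + 1) * T / N) < Y (k + 1) ∧ Y (k + 1) < ψ (((k : ℝ) + 1) * T / N) ∧
      Y (k + 1) = Y k + b (((k : ℝ) + 1) * T / N) (Y (k + 1)) * (T / N)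
        + (Z (((k : ℝ) + 1) * T / N) - Z ((k : ℝ) * T / N))) :
    IsImplicitEuler b Z (T / N) N Y ∧
      ∀ i, 0 < i → i ≤ N → φ (i * (T / N)) < Y i ∧ Y i < ψ (i * (T / N)) := by
  refine ⟨fun k hk => ?_, fun i hi0 hiN => ?_⟩
  · simpa only [Nat.cast_succ, mul_div_assoc] using (hsch k hk).2.2
  · obtain ⟨k, rfl⟩ := Nat.exists_eq_add_of_lt hi0
    simpa only [zero_add, Nat.cast_succ, mul_div_assoc] using
      (hsch k (by omega)).imp_right And.left

theorem neg (hY : IsImplicitEuler b Z h N Y) :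
    IsImplicitEuler (fun t y => -b t (-y)) (fun t => -Z t) h N (fun k => -Y k) := by
  intro k hk
  simp only [neg_neg]
  linarith [hY k hk]

theorem sub_eq_sum (hY : IsImplicitEuler b Z h N Y) {j k : ℕ} (hjk : j ≤ k) (hkN : k ≤ N) :
    Y k - Y j = ∑ i ∈ Ico j k, b (↑(i + 1) * h) (Y (i + 1)) * h + (Z (k * h) - Z (j * h)) := by
  induction k, hjk using Nat.le_induction with
  | base => simp
  | succ k hjk ih =>
    rw [sum_Ico_succ_top hjk]
    linarith [ih (by omega), hY k hkN]

theorem le_sub_of_drift_ge (hY : IsImplicitEuler b Z h N Y) (hh : 0 ≤ h) {κ : ℝ}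
    (hε : 0 ≤ ε) (h0 : 2 * ε ≤ Y 0 - φ 0)
    (hpush : ∀ i, 0 < i → i ≤ N → Y i - φ (i * h) < 2 * ε → κ ≤ b (i * h) (Y i))
    (hosc : ∀ j k, j < k → k ≤ N →
      |Z (k * h) - Z (j * h)| + |φ (k * h) - φ (j * h)| ≤ κ * |k * h - j * h| + ε) :
    ∀ i ≤ N, ε ≤ Y i - φ (i * h) := by
  refine le_of_excursion_drop_le hε (by simpa using h0) fun j k hjk hkN hexc => ?_
  have hcard := card_Ico_mul_eq_sub (h := h) hjk.le
  have hdrift : κ * (k * h - j * h) ≤ ∑ i ∈ Ico j k, b (↑(i + 1) * h) (Y (i + 1)) * h := by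
    refine le_of_eq_of_le ?_ (card_nsmul_le_sum _ _ (κ * h) fun i hi => ?_)
    · rw [nsmul_eq_mul, ← hcard]; ring
    · rw [mem_Ico] at hi
      exact mul_le_mul_of_nonneg_right
        (hpush _ (by omega) (by omega) (hexc _ (by omega) (by omega))) hh
  have hτ : |(k : ℝ) * h - j * h| = k * h - j * h := by
    rw [← hcard]; exact abs_of_nonneg (mul_nonneg (Nat.cast_nonneg _) hh)
  have := hosc j k hjk hkN
  rw [hτ] at this
  linarith [hY.sub_eq_sum hjk.le hkN, neg_abs_le (Z (k * h) - Z (j * h)),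
    le_abs_self (φ (k * h) - φ (j * h))]

theorem le_dist_boundary (hY : IsImplicitEuler b Z h N Y) (hh : 0 ≤ h)
    (hgrid : ∀ i ≤ N, (i : ℝ) * h ∈ Set.Icc 0 T)
    (hin : ∀ i, 0 < i → i ≤ N → φ (i * h) < Y i ∧ Y i < ψ (i * h))
    (hZ : IsHolderOnIcc Λ lam T Z) (hφ : IsHolderOnIcc K lam T φ) (hψ : IsHolderOnIcc K lam T ψ)
    (hlow : ∀ t ∈ Set.Icc (0 : ℝ) T, ∀ y : ℝ, φ t < y → y ≤ φ t + ystar → y < ψ t →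
      c2 / (y - φ t) ^ γ ≤ b t y)
    (hup : ∀ t ∈ Set.Icc (0 : ℝ) T, ∀ y : ℝ, ψ t - ystar ≤ y → y < ψ t → φ t < y →
      b t y ≤ -(c2 / (ψ t - y) ^ γ))
    (hlam0 : 0 ≤ lam) (hlam1 : lam ≤ 1) (hc2 : 0 ≤ c2) (hγ : 0 ≤ γ)
    (hε : 0 ≤ ε) (hεy : 2 * ε ≤ ystar) (h0φ : 2 * ε ≤ Y 0 - φ 0) (h0ψ : 2 * ε ≤ ψ 0 - Y 0)
    (hgain : Λ + K ≤ repulsionGain c2 γ lam ε) :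
    ∀ i ≤ N, ε ≤ Y i - φ (i * h) ∧ ε ≤ ψ (i * h) - Y i := by
  set κ := c2 / (2 * ε) ^ γ
  have hκ : 0 ≤ κ := by positivity
  have hpow : ∀ d, 0 < d → d < 2 * ε → κ ≤ c2 / d ^ γ := fun d hd hd2 =>
    div_le_div_of_nonneg_left hc2 (Real.rpow_pos_of_pos hd _) (Real.rpow_le_rpow hd.le hd2.le hγ)
  have hosc : ∀ f, IsHolderOnIcc K lam T f → ∀ j k, j < k → k ≤ N →
      |Z (k * h) - Z (j * h)| + |f (k * h) - f (j * h)| ≤ κ * |k * h - j * h| + ε := by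
    intro f hf j k hjk hkN
    have hj := hgrid j (by omega)
    have hk := hgrid k hkN
    calc |Z (k * h) - Z (j * h)| + |f (k * h) - f (j * h)|
        ≤ Λ * |k * h - j * h| ^ lam + K * |k * h - j * h| ^ lam :=
          add_le_add (hZ _ hj _ hk) (hf _ hj _ hk)
      _ = (Λ + K) * |k * h - j * h| ^ lam := by ring
      _ ≤ κ * |k * h - j * h| + ε :=
          mul_rpow_le_mul_add hlam0 hlam1 hκ hε (abs_nonneg _) hgain
  intro i hi
  constructor
  · refine hY.le_sub_of_drift_ge hh hε h0φ (fun i hi0 hiN hd => ?_) (hosc φ hφ) i hi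
    obtain ⟨hφi, hψi⟩ := hin i hi0 hiN
    exact (hpow _ (by linarith) hd).trans (hlow _ (hgrid i hiN) _ hφi (by linarith) hψi)
  -- the upper boundary is the lower one of the reflected scheme
  · have := hY.neg.le_sub_of_drift_ge hh hε (φ := fun t => -ψ t) (κ := κ) (by linarith)
      (fun i hi0 hiN hd => ?_) (fun j k hjk hkN => ?_) i hi
    · linarith
    · obtain ⟨hφi, hψi⟩ := hin i hi0 hiN
      have := hup _ (hgrid i hiN) _ (by linarith) hψi hφi
      simp only [neg_neg]
      linarith [hpow _ (by linarith) (by linarith : ψ (i * h) - Y i < 2 * ε)]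
    · simpa only [neg_sub_neg, abs_sub_comm] using hosc ψ hψ j k hjk hkN

theorem abs_sub_le_of_abs_drift_le (hY : IsImplicitEuler b Z h N Y) (hh : 0 ≤ h)
    (hgrid : ∀ i ≤ N, (i : ℝ) * h ∈ Set.Icc 0 T) (hZ : IsHolderOnIcc Λ lam T Z)
    (hlam0 : 0 < lam) (hlam1 : lam ≤ 1) {M : ℝ}
    (hM : ∀ i, 0 < i → i ≤ N → |b (i * h) (Y i)| ≤ M) {j k : ℕ} (hjN : j ≤ N) (hkN : k ≤ N) :
    |Y k - Y j| ≤ (M * T ^ (1 - lam) + Λ) * |k * h - j * h| ^ lam := by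
  wlog hjk : j ≤ k generalizing j k
  · rw [abs_sub_comm, abs_sub_comm (k * h : ℝ)]
    exact this hkN hjN (by omega)
  rcases hjk.eq_or_lt with rfl | hjk
  · simp [Real.zero_rpow hlam0.ne']
  have hM0 : 0 ≤ M := (abs_nonneg _).trans (hM k (by omega) hkN)
  have hcard := card_Ico_mul_eq_sub (h := h) hjk.le
  have hnoise := hZ _ (hgrid j (by omega)) _ (hgrid k hkN)
  set τ := (k : ℝ) * h - j * h
  have hτ : 0 ≤ τ := hcard ▸ mul_nonneg (Nat.cast_nonneg _) hh
  rw [abs_of_nonneg hτ] at hnoise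
  have hτT : τ ≤ T := by linarith [(hgrid k hkN).2, (hgrid j (by omega)).1]
  have hdrift : |∑ i ∈ Ico j k, b (↑(i + 1) * h) (Y (i + 1)) * h| ≤ M * τ := by
    refine (abs_sum_le_sum_abs _ _).trans ((sum_le_card_nsmul _ _ (M * h) fun i hi => ?_).trans ?_)
    · rw [mem_Ico] at hi
      rw [abs_mul, abs_of_nonneg hh]
      exact mul_le_mul_of_nonneg_right (hM _ (by omega) (by omega)) hh
    · rw [nsmul_eq_mul, ← hcard]; exact le_of_eq (by ring)
  rw [abs_of_nonneg hτ, hY.sub_eq_sum hjk.le hkN]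
  calc _ ≤ M * τ + Λ * τ ^ lam := (abs_add_le _ _).trans (add_le_add hdrift hnoise)
    _ = M * τ ^ (1 - lam) * τ ^ lam + Λ * τ ^ lam := by
        rw [mul_assoc, ← Real.rpow_add' hτ (by norm_num), sub_add_cancel, Real.rpow_one]
    _ ≤ M * T ^ (1 - lam) * τ ^ lam + Λ * τ ^ lam := by gcongr
    _ = _ := by ring

theorem abs_sub_le_of_repulsionGain (hY : IsImplicitEuler b Z h N Y) (hh : 0 ≤ h)
    (hgrid : ∀ i ≤ N, (i : ℝ) * h ∈ Set.Icc 0 T)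
    (hin : ∀ i, 0 < i → i ≤ N → φ (i * h) < Y i ∧ Y i < ψ (i * h))
    (hZ : IsHolderOnIcc Λ lam T Z) (hφ : IsHolderOnIcc K lam T φ) (hψ : IsHolderOnIcc K lam T ψ)
    {c1 p : ℝ}
    (hlip : ∀ δ : ℝ, 0 < δ → δ < min 1 ((⨆ t : Set.Icc (0 : ℝ) T, |ψ t.1 - φ t.1|) / 2) →
      ∀ t1 ∈ Set.Icc (0 : ℝ) T, ∀ t2 ∈ Set.Icc (0 : ℝ) T, ∀ y1 y2 : ℝ,
        φ t1 + δ < y1 → y1 < ψ t1 - δ → φ t2 + δ < y2 → y2 < ψ t2 - δ →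
        |b t1 y1 - b t2 y2| ≤ c1 / δ ^ p * (|y1 - y2| + |t1 - t2| ^ lam))
    (hlow : ∀ t ∈ Set.Icc (0 : ℝ) T, ∀ y : ℝ, φ t < y → y ≤ φ t + ystar → y < ψ t →
      c2 / (y - φ t) ^ γ ≤ b t y)
    (hup : ∀ t ∈ Set.Icc (0 : ℝ) T, ∀ y : ℝ, ψ t - ystar ≤ y → y < ψ t → φ t < y →
      b t y ≤ -(c2 / (ψ t - y) ^ γ))
    (hT : 0 ≤ T) (hK : 0 ≤ K) (hc1 : 0 ≤ c1) (hlam0 : 0 < lam) (hlam1 : lam ≤ 1) (hc2 : 0 ≤ c2)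
    (hγ : 0 ≤ γ) (hε : 0 < ε) (hε1 : ε ≤ 1) (hεy : 2 * ε ≤ ystar)
    (h0φ : 2 * ε ≤ Y 0 - φ 0) (h0ψ : 2 * ε ≤ ψ 0 - Y 0)
    (hgain : Λ + K ≤ repulsionGain c2 γ lam ε) {j k : ℕ} (hjN : j ≤ N) (hkN : k ≤ N) :
    |Y k - Y j| ≤ ((|b 0 (Y 0)| + c1 / (ε / 2) ^ p * (ψ 0 - φ 0 + K * T ^ lam + T ^ lam))
      * T ^ (1 - lam) + Λ) * |k * h - j * h| ^ lam := by
  have hdist := hY.le_dist_boundary hh hgrid hin hZ hφ hψ hlow hup hlam0.le hlam1 hc2 hγ hε.le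
    hεy h0φ h0ψ hgain
  have h0 : (0 : ℝ) ∈ Set.Icc 0 T := ⟨le_rfl, hT⟩
  have hδ : ε / 2 < min 1 ((⨆ t : Set.Icc (0 : ℝ) T, |ψ t.1 - φ t.1|) / 2) :=
    lt_min (by linarith) (by linarith [sub_le_iSup_abs_sub hT hK hlam0.le hφ hψ])
  refine hY.abs_sub_le_of_abs_drift_le hh hgrid hZ hlam0 hlam1 (fun i _ hiN => ?_) hjN hkN
  obtain ⟨hφi, hψi⟩ := hdist i hiN
  have hti := hgrid i hiN
  have hYi : |Y i - Y 0| ≤ ψ 0 - φ 0 + K * T ^ lam := by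
    obtain ⟨hψ1, -⟩ := abs_sub_le_iff.1 (hψ.abs_sub_le hK hlam0.le h0 hti)
    obtain ⟨-, hφ2⟩ := abs_sub_le_iff.1 (hφ.abs_sub_le hK hlam0.le h0 hti)
    exact abs_sub_le_iff.2 ⟨by linarith, by linarith⟩
  have hlipi := hlip (ε / 2) (by positivity) hδ _ hti 0 h0 (Y i) (Y 0)
    (by linarith) (by linarith) (by linarith) (by linarith)
  have hti' := abs_sub_rpow_le hlam0.le h0 hti
  calc |b (i * h) (Y i)| ≤ |b 0 (Y 0)| + |b (i * h) (Y i) - b 0 (Y 0)| := by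
        linarith [abs_sub_abs_le_abs_sub (b (i * h) (Y i)) (b 0 (Y 0))]
    _ ≤ _ := by
        gcongr
        refine hlipi.trans (mul_le_mul_of_nonneg_left ?_ (by positivity))
        linarith

end IsImplicitEuler

theorem stmt_8_general
    (T lam : ℝ) (hT : 0 < T) (hlam : lam ∈ Set.Ioo (0:ℝ) 1)
    (phi psi : ℝ → ℝ) (K : ℝ) (hK : 0 < K)
    (hphiH : ∀ s ∈ Set.Icc (0:ℝ) T, ∀ t ∈ Set.Icc (0:ℝ) T, |phi t - phi s| ≤ K * |t - s| ^ lam)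
    (hpsiH : ∀ s ∈ Set.Icc (0:ℝ) T, ∀ t ∈ Set.Icc (0:ℝ) T, |psi t - psi s| ≤ K * |t - s| ^ lam)
    (b : ℝ → ℝ → ℝ) (c1 p c2 ystar gam : ℝ)
    (hc1 : 0 < c1) (hc2 : 0 < c2) (hystar : 0 < ystar)
    (hgam : 1 / lam - 1 < gam)
    (hB2lip : ∀ ε : ℝ, 0 < ε → ε < min 1 ((⨆ t : Set.Icc (0:ℝ) T, |psi t.1 - phi t.1|) / 2) →
      ∀ t1 ∈ Set.Icc (0:ℝ) T, ∀ t2 ∈ Set.Icc (0:ℝ) T, ∀ y1 y2 : ℝ,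
        phi t1 + ε < y1 → y1 < psi t1 - ε → phi t2 + ε < y2 → y2 < psi t2 - ε →
        |b t1 y1 - b t2 y2| ≤ c1 / ε ^ p * (|y1 - y2| + |t1 - t2| ^ lam))
    (hB3low : ∀ t ∈ Set.Icc (0:ℝ) T, ∀ y : ℝ, phi t < y → y ≤ phi t + ystar → y < psi t →
      c2 / (y - phi t) ^ gam ≤ b t y)
    (hB3up : ∀ t ∈ Set.Icc (0:ℝ) T, ∀ y : ℝ, psi t - ystar ≤ y → y < psi t → phi t < y →
      b t y ≤ -(c2 / (psi t - y) ^ gam))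
    (Y0 : ℝ) (hB1 : phi 0 < Y0 ∧ Y0 < psi 0)
    (c3 : ℝ)
    :
    ∃ C : ℝ, 0 < C ∧
      ∀ (Z : ℝ → ℝ) (Lam : ℝ), 0 < Lam → Z 0 = 0 →
        (∀ s ∈ Set.Icc (0:ℝ) T, ∀ t ∈ Set.Icc (0:ℝ) T, |Z t - Z s| ≤ Lam * |t - s| ^ lam) →
        ∀ N : ℕ, 0 < N → c3 * (T / (N : ℝ)) < 1 →
        ∀ Yh : ℕ → ℝ, Yh 0 = Y0 →
          (∀ k : ℕ, k < N →
            phi (((k : ℝ) + 1) * T / (N : ℝ)) < Yh (k + 1) ∧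
            Yh (k + 1) < psi (((k : ℝ) + 1) * T / (N : ℝ)) ∧
            Yh (k + 1) = Yh k + b (((k : ℝ) + 1) * T / (N : ℝ)) (Yh (k + 1)) * (T / (N : ℝ))
              + (Z (((k : ℝ) + 1) * T / (N : ℝ)) - Z ((k : ℝ) * T / (N : ℝ)))) →
          ∀ k : ℕ, k ≤ N → ∀ n : ℕ, n ≤ N →
            |Yh k - Yh n| ≤
              C * (1 + Lam ^ (max p (gam * lam + lam - 1) / (gam * lam + lam - 1)))
                * |(k : ℝ) * T / (N : ℝ) - (n : ℝ) * T / (N : ℝ)| ^ lam := by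
  obtain ⟨hlam0, hlam1⟩ := hlam
  obtain ⟨hγ, hθ⟩ := exponent_pos_of_one_div_sub_one_lt hlam0 hlam1 hgam
  obtain ⟨A, hA, hAφ, hAψ, hAy⟩ := exists_pos_two_mul_le (sub_pos.2 hB1.1) (sub_pos.2 hB1.2)
    (lt_min hystar two_pos)
  obtain ⟨a, ha, hscale⟩ := exists_repulsionGain_ge (p := p) hA hc2 hK.le hc1.le hθ
  set W := psi 0 - phi 0 + K * T ^ lam + T ^ lam
  have hW : 0 ≤ W := by
    have := Real.rpow_nonneg hT.le lam
    linarith [mul_nonneg hK.le this, hB1.1, hB1.2]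
  refine ⟨(|b 0 Y0| + a * W) * T ^ (1 - lam) + 1, by positivity, ?_⟩
  intro Z Lam hLam _ hZ N hN _ Yh hYh0 hsch k hk n hn
  obtain ⟨ε, hε, hεA, hgain, hεp⟩ := hscale Lam hLam.le
  obtain ⟨hY, hin⟩ := IsImplicitEuler.of_forall_lt hsch
  have hbound := hY.abs_sub_le_of_repulsionGain (div_nonneg hT.le (Nat.cast_nonneg N))
    (fun i hi => natCast_mul_div_mem_Icc hT.le hN hi) hin hZ hphiH hpsiH hB2lip hB3low hB3up
    hT.le hK.le hc1.le hlam0 hlam1.le hc2.le hγ.le hε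
    (by linarith [min_le_right ystar 2]) (by linarith [min_le_left ystar 2])
    (by linarith [hYh0]) (by linarith [hYh0]) hgain hn hk
  rw [hYh0] at hbound
  simp only [mul_div_assoc]
  refine hbound.trans (mul_le_mul_of_nonneg_right ?_ (Real.rpow_nonneg (abs_nonneg _) _))
  exact add_mul_add_le_mul_one_add_rpow (abs_nonneg _) hW (Real.rpow_nonneg hT.le _) hLam.le ha
    hεp (div_le_div_of_nonneg_right (le_max_left p _) hθ.le)
    (by rw [le_div_iff₀ hθ, one_mul]; exact le_max_right p _)

theorem stmt_8
    (T lam : ℝ) (hT : 0 < T) (hlam : lam ∈ Set.Ioo (0:ℝ) 1)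
    (phi psi : ℝ → ℝ) (K : ℝ) (hK : 0 < K)
    (hphiH : ∀ s ∈ Set.Icc (0:ℝ) T, ∀ t ∈ Set.Icc (0:ℝ) T, |phi t - phi s| ≤ K * |t - s| ^ lam)
    (hpsiH : ∀ s ∈ Set.Icc (0:ℝ) T, ∀ t ∈ Set.Icc (0:ℝ) T, |psi t - psi s| ≤ K * |t - s| ^ lam)
    (hphipsi : ∀ t ∈ Set.Icc (0:ℝ) T, phi t < psi t)
    (b : ℝ → ℝ → ℝ) (c1 p c2 ystar gam : ℝ)
    (hc1 : 0 < c1) (hp : 1 < p) (hc2 : 0 < c2) (hystar : 0 < ystar)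
    (hgam : 1 / lam - 1 < gam)
    (hB2cont : ContinuousOn (fun q : ℝ × ℝ => b q.1 q.2)
      {q : ℝ × ℝ | q.1 ∈ Set.Icc (0:ℝ) T ∧ phi q.1 < q.2 ∧ q.2 < psi q.1})
    (hB2lip : ∀ ε : ℝ, 0 < ε → ε < min 1 ((⨆ t : Set.Icc (0:ℝ) T, |psi t.1 - phi t.1|) / 2) →
      ∀ t1 ∈ Set.Icc (0:ℝ) T, ∀ t2 ∈ Set.Icc (0:ℝ) T, ∀ y1 y2 : ℝ,
        phi t1 + ε < y1 → y1 < psi t1 - ε → phi t2 + ε < y2 → y2 < psi t2 - ε →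
        |b t1 y1 - b t2 y2| ≤ c1 / ε ^ p * (|y1 - y2| + |t1 - t2| ^ lam))
    (hB3low : ∀ t ∈ Set.Icc (0:ℝ) T, ∀ y : ℝ, phi t < y → y ≤ phi t + ystar → y < psi t →
      c2 / (y - phi t) ^ gam ≤ b t y)
    (hB3up : ∀ t ∈ Set.Icc (0:ℝ) T, ∀ y : ℝ, psi t - ystar ≤ y → y < psi t → phi t < y →
      b t y ≤ -(c2 / (psi t - y) ^ gam))
    (Y0 : ℝ) (hB1 : phi 0 < Y0 ∧ Y0 < psi 0)
    (bp : ℝ → ℝ → ℝ) (c3 : ℝ) (hc3 : 0 < c3)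
    (hB4deriv : ∀ t ∈ Set.Icc (0:ℝ) T, ∀ y : ℝ, phi t < y → y < psi t →
      HasDerivAt (fun x => b t x) (bp t y) y)
    (hB4cont : ContinuousOn (fun q : ℝ × ℝ => bp q.1 q.2)
      {q : ℝ × ℝ | q.1 ∈ Set.Icc (0:ℝ) T ∧ phi q.1 < q.2 ∧ q.2 < psi q.1})
    (hB4lt : ∀ t ∈ Set.Icc (0:ℝ) T, ∀ y : ℝ, phi t < y → y < psi t → bp t y < c3)
    :
    ∃ C : ℝ, 0 < C ∧
      ∀ (Z : ℝ → ℝ) (Lam : ℝ), 0 < Lam → Z 0 = 0 →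
        (∀ s ∈ Set.Icc (0:ℝ) T, ∀ t ∈ Set.Icc (0:ℝ) T, |Z t - Z s| ≤ Lam * |t - s| ^ lam) →
        ∀ N : ℕ, 0 < N → c3 * (T / (N : ℝ)) < 1 →
        ∀ Yh : ℕ → ℝ, Yh 0 = Y0 →
          (∀ k : ℕ, k < N →
            phi (((k : ℝ) + 1) * T / (N : ℝ)) < Yh (k + 1) ∧
            Yh (k + 1) < psi (((k : ℝ) + 1) * T / (N : ℝ)) ∧
            Yh (k + 1) = Yh k + b (((k : ℝ) + 1) * T / (N : ℝ)) (Yh (k + 1)) * (T / (N : ℝ))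
              + (Z (((k : ℝ) + 1) * T / (N : ℝ)) - Z ((k : ℝ) * T / (N : ℝ)))) →
          ∀ k : ℕ, k ≤ N → ∀ n : ℕ, n ≤ N →
            |Yh k - Yh n| ≤
              C * (1 + Lam ^ (max p (gam * lam + lam - 1) / (gam * lam + lam - 1)))
                * |(k : ℝ) * T / (N : ℝ) - (n : ℝ) * T / (N : ℝ)| ^ lam :=
  stmt_8_general T lam hT hlam phi psi K hK hphiH hpsiH b c1 p c2 ystar gam hc1 hc2 hystar hgam
    hB2lip hB3low hB3up Y0 hB1 c3
end

section
/- Under Assumptions (B1)–(B4), fix a noise path Z with Hölder constant Λ, let Y be the corresponding pathwise solution and, for each N with c3·Δ_N < 1, let Ŷ_N be the corresponding drift-implicit Euler scheme. Then for every r ≥ 1 there exists a constant 𝒞 > 0, independent of N, such that max_{k=0,…,N} |Y(t_k) − Ŷ_N(t_k)|^r ≤ 𝒞·Δ_N^{λr} for every N with c3·Δ_N < 1. -/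
/-!
Write `e_k = Y(t_k) − Ŷ_N(t_k)` and `g(s) = b(s, Y(s))`. Subtracting the scheme from the integral
equation gives the implicit recursion
`e_{k+1} = e_k + R_k + Δ (b(t_{k+1}, Y(t_{k+1})) − b(t_{k+1}, Ŷ_N(t_{k+1})))`,
with `R_k = ∫_{t_k}^{t_{k+1}} (g(s) − g(t_{k+1})) ds`. By compactness the solution keeps a positive
distance from `φ` and `ψ`, so along it (B2) makes `b` Lipschitz in `y` and `λ`-Hölder in `t`; as `Y`
itself is `λ`-Hölder, so is `g`, whence `|R_k| ≤ C Δ^{1+λ}`. Since `∂b/∂y < c3`, the drift is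
one-sided Lipschitz, which turns the recursion into `(1 − c3 Δ) |e_{k+1}| ≤ |e_k| + |R_k|`; a
discrete Gronwall argument and `(1 − x)⁻¹ ≤ e^{2x}` for `x ≤ 1/2` give `|e_k| ≤ C T e^{2 c3 T} Δ^λ`.
-/

open MeasureTheory Set Filter Topology

lemma continuousOn_of_abs_sub_le_mul_rpow {f : ℝ → ℝ} {S : Set ℝ} {K lam : ℝ} (hlam : 0 < lam)
    (hf : ∀ s ∈ S, ∀ t ∈ S, |f t - f s| ≤ K * |t - s| ^ lam) : ContinuousOn f S := by
  intro s hs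
  have hK : Tendsto (fun t => K * |t - s| ^ lam) (𝓝 s) (𝓝 0) := by
    have := (((continuous_sub_right s).abs.rpow_const fun _ => Or.inr hlam.le).const_mul K).tendsto
      s
    simpa [Real.zero_rpow hlam.ne'] using this
  rw [ContinuousWithinAt, tendsto_iff_norm_sub_tendsto_zero]
  exact squeeze_zero' (.of_forall fun _ => norm_nonneg _)
    (eventually_nhdsWithin_of_forall fun t ht => hf s hs t ht) (hK.mono_left nhdsWithin_le_nhds)

lemma le_rpow_one_sub_mul_rpow {x D lam : ℝ} (hx : 0 ≤ x) (hxD : x ≤ D) (hlam : lam ≤ 1) :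
    x ≤ D ^ (1 - lam) * x ^ lam :=
  calc x = x ^ (1 - lam) * x ^ lam := by
        rw [← Real.rpow_add' hx (by norm_num), sub_add_cancel, Real.rpow_one]
    _ ≤ D ^ (1 - lam) * x ^ lam := by gcongr

lemma le_ciSup_of_continuousOn {α : Type*} [TopologicalSpace α] {f : α → ℝ} {K : Set α}
    (hK : IsCompact K) (hf : ContinuousOn f K) {x : α} (hx : x ∈ K) : f x ≤ ⨆ t : K, f t :=
  le_ciSup (f := fun t : K => f t) (by simpa only [image_eq_range] using hK.bddAbove_image hf)
    ⟨x, hx⟩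

lemma IsCompact.exists_pos_add_le_of_lt {α : Type*} [TopologicalSpace α] {K : Set α}
    (hK : IsCompact K) (hne : K.Nonempty) {phi psi Y : α → ℝ} (hphi : ContinuousOn phi K)
    (hpsi : ContinuousOn psi K) (hY : ContinuousOn Y K) (h : ∀ t ∈ K, phi t < Y t ∧ Y t < psi t) :
    ∃ δ > 0, ∀ t ∈ K, phi t + δ ≤ Y t ∧ Y t + δ ≤ psi t := by
  obtain ⟨t₀, ht₀, hmin⟩ := hK.exists_isMinOn hne
    (continuous_min.comp_continuousOn ((hY.sub hphi).prodMk (hpsi.sub hY)))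
  refine ⟨min (Y t₀ - phi t₀) (psi t₀ - Y t₀), lt_min ?_ ?_, fun t ht => ?_⟩
  · linarith [h t₀ ht₀]
  · linarith [h t₀ ht₀]
  · have hle : min (Y t₀ - phi t₀) (psi t₀ - Y t₀) ≤ min (Y t - phi t) (psi t - Y t) :=
      isMinOn_iff.1 hmin t ht
    constructor <;> linarith [le_min_iff.1 hle]

lemma eq_add_integral_add_sub {Y g Z : ℝ → ℝ} {a b Y₀ : ℝ} (hg : ContinuousOn g (Icc a b))
    (hY : ∀ t ∈ Icc a b, Y t = Y₀ + (∫ x in a..t, g x) + Z t) :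
    ∀ s ∈ Icc a b, ∀ t ∈ Icc a b, Y t = Y s + (∫ x in s..t, g x) + (Z t - Z s) := by
  intro s hs t ht
  have hint : ∀ u ∈ Icc a b, IntervalIntegrable g volume a u := fun u hu =>
    (hg.mono (uIcc_subset_Icc ⟨le_rfl, hs.1.trans hs.2⟩ hu)).intervalIntegrable
  rw [hY s hs, hY t ht, ← intervalIntegral.integral_interval_sub_left (hint t ht) (hint s hs)]
  ring

lemma abs_sub_le_of_eq_integral_add {Y g Z : ℝ → ℝ} {a b M Λ lam : ℝ} (hlam : lam ≤ 1)
    (hg : ∀ x ∈ Icc a b, |g x| ≤ M)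
    (hZ : ∀ s ∈ Icc a b, ∀ t ∈ Icc a b, |Z t - Z s| ≤ Λ * |t - s| ^ lam)
    (hY : ∀ s ∈ Icc a b, ∀ t ∈ Icc a b, Y t = Y s + (∫ x in s..t, g x) + (Z t - Z s)) :
    ∀ s ∈ Icc a b, ∀ t ∈ Icc a b, |Y t - Y s| ≤ (M * (b - a) ^ (1 - lam) + Λ) * |t - s| ^ lam := by
  intro s hs t ht
  have hM : 0 ≤ M := (abs_nonneg _).trans (hg s hs)
  have hint : |∫ x in s..t, g x| ≤ M * |t - s| := by
    simpa only [Real.norm_eq_abs] using intervalIntegral.norm_integral_le_of_norm_le_const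
      (f := g) fun x hx => hg x (uIcc_subset_Icc hs ht (uIoc_subset_uIcc hx))
  have hts : |t - s| ≤ b - a :=
    abs_sub_le_iff.2 ⟨by linarith [ht.2, hs.1], by linarith [hs.2, ht.1]⟩
  calc |Y t - Y s| = |(∫ x in s..t, g x) + (Z t - Z s)| := by rw [hY s hs t ht]; ring_nf
    _ ≤ M * |t - s| + Λ * |t - s| ^ lam := (abs_add_le _ _).trans (add_le_add hint (hZ s hs t ht))
    _ ≤ M * ((b - a) ^ (1 - lam) * |t - s| ^ lam) + Λ * |t - s| ^ lam := by
        gcongr; exact le_rpow_one_sub_mul_rpow (abs_nonneg _) hts hlam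
    _ = _ := by ring

lemma abs_integral_sub_mul_le {g : ℝ → ℝ} {S : Set ℝ} {C lam t t' : ℝ} (hC : 0 ≤ C)
    (hlam : 0 ≤ lam) (htt' : t ≤ t') (hS : Icc t t' ⊆ S)
    (hg : ∀ s ∈ S, ∀ u ∈ S, |g u - g s| ≤ C * |u - s| ^ lam)
    (hgi : IntervalIntegrable g volume t t') :
    |(∫ x in t..t', g x) - (t' - t) * g t'| ≤ C * (t' - t) ^ lam * (t' - t) := by
  have hbound : ∀ x ∈ uIoc t t', ‖g x - g t'‖ ≤ C * (t' - t) ^ lam := by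
    intro x hx
    rw [uIoc_of_le htt'] at hx
    have hxt' : |x - t'| ≤ t' - t := abs_sub_le_iff.2 ⟨by linarith [hx.2], by linarith [hx.1]⟩
    calc ‖g x - g t'‖ ≤ C * |x - t'| ^ lam :=
          hg t' (hS ⟨htt', le_rfl⟩) x (hS (Ioc_subset_Icc_self hx))
      _ ≤ C * (t' - t) ^ lam := by gcongr
  have := intervalIntegral.norm_integral_le_of_norm_le_const hbound
  rwa [intervalIntegral.integral_sub hgi intervalIntegrable_const, intervalIntegral.integral_const,
    smul_eq_mul, Real.norm_eq_abs, abs_of_nonneg (sub_nonneg.2 htt')] at this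

lemma mul_sub_le_of_hasDerivAt_le {f f' : ℝ → ℝ} {D : Set ℝ} {c : ℝ} (hD : Convex ℝ D)
    (hf : ∀ x ∈ D, HasDerivAt f (f' x) x) (hf' : ∀ x ∈ D, f' x ≤ c) {u v : ℝ} (hu : u ∈ D)
    (hv : v ∈ D) : (f u - f v) * (u - v) ≤ c * (u - v) ^ 2 := by
  have hderiv : ∀ x ∈ D, HasDerivAt (fun x => f x - c * x) (f' x - c * 1) x := fun x hx =>
    (hf x hx).sub ((hasDerivAt_id' x).const_mul c)
  have hanti : AntitoneOn (fun x => f x - c * x) D :=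
    antitoneOn_of_hasDerivWithinAt_nonpos hD
      (fun x hx => (hderiv x hx).continuousAt.continuousWithinAt)
      (fun x hx => (hderiv x (interior_subset hx)).hasDerivWithinAt)
      (fun x hx => by linarith [hf' x (interior_subset hx)])
  rcases le_total u v with huv | hvu
  · nlinarith [hanti hu hv huv]
  · nlinarith [hanti hv hu hvu]

lemma abs_sub_mul_one_sub_le {u v e R Δ c fu fv : ℝ} (hΔ : 0 ≤ Δ)
    (hstep : u - v = e + R + Δ * (fu - fv)) (hosl : (fu - fv) * (u - v) ≤ c * (u - v) ^ 2) :
    |u - v| * (1 - c * Δ) ≤ |e| + |R| := by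
  have hmul : |u - v| * (|u - v| * (1 - c * Δ)) ≤ |u - v| * (|e| + |R|) := by
    have hlin : (e + R) * (u - v) ≤ |u - v| * (|e| + |R|) := by
      rw [mul_comm]
      exact (le_abs_self _).trans ((abs_mul _ _).trans_le
        (mul_le_mul_of_nonneg_left (abs_add_le e R) (abs_nonneg _)))
    have hexpand : (u - v) ^ 2 = (e + R) * (u - v) + Δ * ((fu - fv) * (u - v)) := by
      linear_combination (u - v) * hstep
    have hlhs : |u - v| * (|u - v| * (1 - c * Δ)) = (u - v) ^ 2 - c * Δ * (u - v) ^ 2 := by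
      rw [← mul_assoc, abs_mul_abs_self]; ring
    linarith [mul_le_mul_of_nonneg_left hosl hΔ]
  rcases (abs_nonneg (u - v)).eq_or_lt with h0 | hpos
  · rw [← h0, zero_mul]; positivity
  · exact le_of_mul_le_mul_left hmul hpos

lemma mul_pow_le_mul_of_le_add {e : ℕ → ℝ} {q A : ℝ} {n : ℕ} (hq0 : 0 ≤ q) (hq1 : q ≤ 1)
    (hA : 0 ≤ A) (he0 : e 0 ≤ 0) (hstep : ∀ j < n, e (j + 1) * q ≤ e j + A) :
    ∀ j ≤ n, e j * q ^ j ≤ A * j := by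
  intro j
  induction j with
  | zero => simpa using he0
  | succ j ih =>
    intro hj
    calc e (j + 1) * q ^ (j + 1) = e (j + 1) * q * q ^ j := by ring
      _ ≤ (e j + A) * q ^ j := mul_le_mul_of_nonneg_right (hstep j hj) (pow_nonneg hq0 j)
      _ = e j * q ^ j + A * q ^ j := by ring
      _ ≤ A * j + A * 1 :=
          add_le_add (ih (by omega)) (mul_le_mul_of_nonneg_left (pow_le_one₀ hq0 hq1) hA)
      _ = A * ↑(j + 1) := by push_cast; ring

lemma one_le_one_sub_mul_exp {x : ℝ} (hx0 : 0 ≤ x) (hx : x ≤ 1 / 2) :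
    1 ≤ (1 - x) * Real.exp (2 * x) := by
  nlinarith [Real.add_one_le_exp (2 * x)]

lemma le_mul_exp_of_mul_one_sub_pow_le {e x B : ℝ} {k N : ℕ} (he : 0 ≤ e) (hx0 : 0 ≤ x)
    (hx : x ≤ 1 / 2) (hk : k ≤ N) (h : e * (1 - x) ^ k ≤ B) : e ≤ B * Real.exp (2 * x * N) :=
  calc e = e * 1 := (mul_one e).symm
    _ ≤ e * ((1 - x) * Real.exp (2 * x)) ^ N :=
        mul_le_mul_of_nonneg_left (one_le_pow₀ (one_le_one_sub_mul_exp hx0 hx)) he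
    _ = e * (1 - x) ^ N * Real.exp (2 * x * N) := by
        rw [mul_pow, ← Real.exp_nat_mul]; ring_nf
    _ ≤ e * (1 - x) ^ k * Real.exp (2 * x * N) := by
        gcongr e * ?_ * _
        exact pow_le_pow_of_le_one (by linarith) (by linarith) hk
    _ ≤ B * Real.exp (2 * x * N) := by gcongr

lemma exists_holder_drift_along_solution {T lam Λ c1 p Y₀ : ℝ} {phi psi Y Z : ℝ → ℝ}
    {b : ℝ → ℝ → ℝ} (hT : 0 ≤ T) (hlam : lam ≤ 1) (hc1 : 0 < c1) (hΛ : 0 ≤ Λ)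
    (hphi : ContinuousOn phi (Icc 0 T)) (hpsi : ContinuousOn psi (Icc 0 T))
    (hb : ContinuousOn (fun q : ℝ × ℝ => b q.1 q.2)
      {q : ℝ × ℝ | q.1 ∈ Icc (0:ℝ) T ∧ phi q.1 < q.2 ∧ q.2 < psi q.1})
    (hblip : ∀ ε : ℝ, 0 < ε → ε < min 1 ((⨆ t : Icc (0:ℝ) T, |psi t.1 - phi t.1|) / 2) →
      ∀ t1 ∈ Icc (0:ℝ) T, ∀ t2 ∈ Icc (0:ℝ) T, ∀ y1 y2 : ℝ,
        phi t1 + ε < y1 → y1 < psi t1 - ε → phi t2 + ε < y2 → y2 < psi t2 - ε →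
        |b t1 y1 - b t2 y2| ≤ c1 / ε ^ p * (|y1 - y2| + |t1 - t2| ^ lam))
    (hZ : ∀ s ∈ Icc (0:ℝ) T, ∀ t ∈ Icc (0:ℝ) T, |Z t - Z s| ≤ Λ * |t - s| ^ lam)
    (hYc : ContinuousOn Y (Icc 0 T)) (hY : ∀ t ∈ Icc (0:ℝ) T, phi t < Y t ∧ Y t < psi t)
    (hYeq : ∀ t ∈ Icc (0:ℝ) T, Y t = Y₀ + (∫ s in (0:ℝ)..t, b s (Y s)) + Z t) :
    ∃ C > 0, ∀ s ∈ Icc (0:ℝ) T, ∀ t ∈ Icc (0:ℝ) T,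
      |b t (Y t) - b s (Y s)| ≤ C * |t - s| ^ lam := by
  have h0 : (0:ℝ) ∈ Icc 0 T := ⟨le_rfl, hT⟩
  have hg : ContinuousOn (fun s => b s (Y s)) (Icc 0 T) :=
    hb.comp (continuousOn_id.prodMk hYc) fun s hs => ⟨hs, hY s hs⟩
  obtain ⟨M, hM⟩ := isCompact_Icc.exists_bound_of_continuousOn hg
  have hYH := abs_sub_le_of_eq_integral_add hlam hM hZ (eq_add_integral_add_sub hg hYeq)
  simp only [sub_zero] at hYH
  set H := M * T ^ (1 - lam) + Λ
  have hH : 0 ≤ H := by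
    have : 0 ≤ M := (norm_nonneg _).trans (hM 0 h0)
    positivity
  obtain ⟨δ, hδ, hsep⟩ := isCompact_Icc.exists_pos_add_le_of_lt ⟨0, h0⟩ hphi hpsi hYc hY
  set S := ⨆ t : Icc (0:ℝ) T, |psi t.1 - phi t.1|
  have hS : 0 < S := calc
    0 < psi 0 - phi 0 := by linarith [hY 0 h0]
    _ ≤ S := (le_abs_self _).trans (le_ciSup_of_continuousOn isCompact_Icc (hpsi.sub hphi).abs h0)
  obtain ⟨ε, hε, hεm⟩ := exists_between (lt_min hδ (lt_min one_pos (half_pos hS)))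
  obtain ⟨hεδ, hεS⟩ := lt_min_iff.1 hεm
  refine ⟨c1 / ε ^ p * (H + 1), by positivity, fun s hs t ht => ?_⟩
  calc |b t (Y t) - b s (Y s)| ≤ c1 / ε ^ p * (|Y t - Y s| + |t - s| ^ lam) :=
        hblip ε hε hεS t ht s hs _ _ (by linarith [hsep t ht]) (by linarith [hsep t ht])
          (by linarith [hsep s hs]) (by linarith [hsep s hs])
    _ ≤ c1 / ε ^ p * (H * |t - s| ^ lam + |t - s| ^ lam) := by gcongr; exact hYH s hs t ht
    _ = c1 / ε ^ p * (H + 1) * |t - s| ^ lam := by ring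

lemma euler_error_mul_pow_le {b : ℝ → ℝ → ℝ} {Y Z : ℝ → ℝ} {Yh t : ℕ → ℝ} {T lam C c Δ : ℝ}
    {N : ℕ} (hlam : 0 < lam) (hC : 0 ≤ C) (hc : 0 ≤ c) (hΔ : 0 ≤ Δ) (hcΔ : c * Δ ≤ 1)
    (ht : ∀ k ≤ N, t k ∈ Icc 0 T) (ht_succ : ∀ k, t (k + 1) = t k + Δ)
    (hg : ∀ s ∈ Icc 0 T, ∀ u ∈ Icc 0 T, |b u (Y u) - b s (Y s)| ≤ C * |u - s| ^ lam)
    (hY : ∀ s ∈ Icc 0 T, ∀ u ∈ Icc 0 T, Y u = Y s + (∫ x in s..u, b x (Y x)) + (Z u - Z s))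
    (hYh0 : Yh 0 = Y (t 0))
    (hYh : ∀ k < N,
      Yh (k + 1) = Yh k + b (t (k + 1)) (Yh (k + 1)) * Δ + (Z (t (k + 1)) - Z (t k)))
    (hosl : ∀ k < N, (b (t (k + 1)) (Y (t (k + 1))) - b (t (k + 1)) (Yh (k + 1))) *
      (Y (t (k + 1)) - Yh (k + 1)) ≤ c * (Y (t (k + 1)) - Yh (k + 1)) ^ 2) :
    ∀ k ≤ N, |Y (t k) - Yh k| * (1 - c * Δ) ^ k ≤ C * Δ ^ lam * Δ * k := by
  refine mul_pow_le_mul_of_le_add (e := fun k => |Y (t k) - Yh k|) (by linarith)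
    (by linarith [mul_nonneg hc hΔ]) (by positivity) (by simp [hYh0]) fun k hk => ?_
  have hk0 := ht k hk.le
  have hk1 := ht (k + 1) hk
  have hR := abs_integral_sub_mul_le hC hlam.le (by linarith [ht_succ k])
    (Icc_subset_Icc hk0.1 hk1.2) hg
    ((continuousOn_of_abs_sub_le_mul_rpow hlam hg).mono (Icc_subset_Icc hk0.1 hk1.2)
      |>.intervalIntegrable_of_Icc (by linarith [ht_succ k]))
  rw [ht_succ k, add_sub_cancel_left, ← ht_succ k] at hR
  calc |Y (t (k + 1)) - Yh (k + 1)| * (1 - c * Δ)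
      ≤ |Y (t k) - Yh k|
          + |(∫ x in t k..t (k + 1), b x (Y x)) - Δ * b (t (k + 1)) (Y (t (k + 1)))| :=
        abs_sub_mul_one_sub_le hΔ (by linear_combination hY _ hk0 _ hk1 - hYh k hk) (hosl k hk)
    _ ≤ |Y (t k) - Yh k| + C * Δ ^ lam * Δ := by gcongr

lemma euler_error_rpow_le {e c Δ T G C lam r : ℝ} {k N : ℕ} (hc : 0 < c) (hΔ : 0 < Δ)
    (hΔN : Δ * N = T) (hk : k ≤ N) (hlam : 0 ≤ lam) (hr : 0 ≤ r) (hC : 0 ≤ C) (he : 0 ≤ e)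
    (heG : e ≤ G) (herr : e * (1 - c * Δ) ^ k ≤ C * Δ ^ lam * Δ * k) :
    e ^ r ≤ max ((C * T * Real.exp (2 * c * T)) ^ r) (G ^ r * (2 * c) ^ (lam * r)) *
      Δ ^ (lam * r) := by
  rcases le_or_gt (c * Δ) (1 / 2) with hsmall | hlarge
  · have hk' : (k : ℝ) ≤ N := by exact_mod_cast hk
    have hT : 0 ≤ T := hΔN ▸ by positivity
    have hbound : e ≤ C * T * Real.exp (2 * c * T) * Δ ^ lam := calc
      e ≤ C * Δ ^ lam * Δ * k * Real.exp (2 * (c * Δ) * N) :=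
          le_mul_exp_of_mul_one_sub_pow_le he (by positivity) hsmall hk herr
      _ ≤ C * Δ ^ lam * Δ * N * Real.exp (2 * (c * Δ) * N) := by gcongr
      _ = C * T * Real.exp (2 * c * T) * Δ ^ lam := by rw [← hΔN]; ring_nf
    calc e ^ r ≤ (C * T * Real.exp (2 * c * T) * Δ ^ lam) ^ r := by gcongr
      _ = (C * T * Real.exp (2 * c * T)) ^ r * Δ ^ (lam * r) := by
          rw [Real.mul_rpow (by positivity) (by positivity), ← Real.rpow_mul hΔ.le]
      _ ≤ _ := by gcongr; exact le_max_left _ _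
  · -- for large steps the trivial bound `e ≤ G` is already of order `Δ ^ lam`
    calc e ^ r ≤ G ^ r := by gcongr
      _ ≤ G ^ r * (2 * c * Δ) ^ (lam * r) :=
          le_mul_of_one_le_right (by have := he.trans heG; positivity)
            (Real.one_le_rpow (by linarith) (by positivity))
      _ = G ^ r * (2 * c) ^ (lam * r) * Δ ^ (lam * r) := by
          rw [Real.mul_rpow (by positivity) hΔ.le]; ring
      _ ≤ _ := by gcongr; exact le_max_right _ _

theorem stmt_9_general
    (T lam : ℝ) (hT : 0 < T) (hlam : lam ∈ Set.Ioo (0:ℝ) 1)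
    (phi psi : ℝ → ℝ) (K : ℝ)
    (hphiH : ∀ s ∈ Set.Icc (0:ℝ) T, ∀ t ∈ Set.Icc (0:ℝ) T, |phi t - phi s| ≤ K * |t - s| ^ lam)
    (hpsiH : ∀ s ∈ Set.Icc (0:ℝ) T, ∀ t ∈ Set.Icc (0:ℝ) T, |psi t - psi s| ≤ K * |t - s| ^ lam)
    (b : ℝ → ℝ → ℝ) (c1 p : ℝ)
    (hc1 : 0 < c1)
    (hB2cont : ContinuousOn (fun q : ℝ × ℝ => b q.1 q.2)
      {q : ℝ × ℝ | q.1 ∈ Set.Icc (0:ℝ) T ∧ phi q.1 < q.2 ∧ q.2 < psi q.1})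
    (hB2lip : ∀ ε : ℝ, 0 < ε → ε < min 1 ((⨆ t : Set.Icc (0:ℝ) T, |psi t.1 - phi t.1|) / 2) →
      ∀ t1 ∈ Set.Icc (0:ℝ) T, ∀ t2 ∈ Set.Icc (0:ℝ) T, ∀ y1 y2 : ℝ,
        phi t1 + ε < y1 → y1 < psi t1 - ε → phi t2 + ε < y2 → y2 < psi t2 - ε →
        |b t1 y1 - b t2 y2| ≤ c1 / ε ^ p * (|y1 - y2| + |t1 - t2| ^ lam))
    (Y0 : ℝ)
    (bp : ℝ → ℝ → ℝ) (c3 : ℝ) (hc3 : 0 < c3)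
    (hB4deriv : ∀ t ∈ Set.Icc (0:ℝ) T, ∀ y : ℝ, phi t < y → y < psi t →
      HasDerivAt (fun x => b t x) (bp t y) y)
    (hB4lt : ∀ t ∈ Set.Icc (0:ℝ) T, ∀ y : ℝ, phi t < y → y < psi t → bp t y < c3)
    (Z : ℝ → ℝ) (Lam : ℝ) (hLam : 0 < Lam) (hZ0 : Z 0 = 0)
    (hZH : ∀ s ∈ Set.Icc (0:ℝ) T, ∀ t ∈ Set.Icc (0:ℝ) T, |Z t - Z s| ≤ Lam * |t - s| ^ lam)
    (Y : ℝ → ℝ) (hYc : ContinuousOn Y (Set.Icc (0:ℝ) T))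
    (hYsand : ∀ t ∈ Set.Icc (0:ℝ) T, phi t < Y t ∧ Y t < psi t)
    (hYeq : ∀ t ∈ Set.Icc (0:ℝ) T, Y t = Y0 + (∫ s in (0:ℝ)..t, b s (Y s)) + Z t)
    (Yh : ℕ → ℕ → ℝ) (hYh0 : ∀ N : ℕ, Yh N 0 = Y0)
    (hYhrec : ∀ N : ℕ, 0 < N → c3 * (T / (N : ℝ)) < 1 → ∀ k : ℕ, k < N →
      phi (((k : ℝ) + 1) * T / (N : ℝ)) < Yh N (k + 1) ∧
      Yh N (k + 1) < psi (((k : ℝ) + 1) * T / (N : ℝ)) ∧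
      Yh N (k + 1) = Yh N k + b (((k : ℝ) + 1) * T / (N : ℝ)) (Yh N (k + 1)) * (T / (N : ℝ))
        + (Z (((k : ℝ) + 1) * T / (N : ℝ)) - Z ((k : ℝ) * T / (N : ℝ))))
    :
    ∀ r : ℝ, 1 ≤ r → ∃ C : ℝ, 0 < C ∧
      ∀ N : ℕ, 0 < N → c3 * (T / (N : ℝ)) < 1 →
        ∀ k : ℕ, k ≤ N →
          |Y ((k : ℝ) * T / (N : ℝ)) - Yh N k| ^ r ≤ C * (T / (N : ℝ)) ^ (lam * r) := by
  obtain ⟨hlam0, hlam1⟩ := hlam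
  have h0 : (0:ℝ) ∈ Icc 0 T := ⟨le_rfl, hT.le⟩
  have hphic := continuousOn_of_abs_sub_le_mul_rpow hlam0 hphiH
  have hpsic := continuousOn_of_abs_sub_le_mul_rpow hlam0 hpsiH
  obtain ⟨C, hC, hg⟩ := exists_holder_drift_along_solution hT.le hlam1.le hc1 hLam.le hphic hpsic
    hB2cont hB2lip hZH hYc hYsand hYeq
  have hY0 : Y 0 = Y0 := by simpa [hZ0] using hYeq 0 h0
  set S := ⨆ t : Icc (0:ℝ) T, |psi t.1 - phi t.1|
  have hgap : ∀ t ∈ Icc 0 T, ∀ y, phi t < y → y < psi t → |Y t - y| ≤ S := fun t ht y hy hy' =>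
    (show |Y t - y| ≤ psi t - phi t from
      abs_sub_le_iff.2 ⟨by linarith [hYsand t ht], by linarith [hYsand t ht]⟩).trans
      ((le_abs_self _).trans (le_ciSup_of_continuousOn isCompact_Icc (hpsic.sub hphic).abs ht))
  intro r hr
  refine ⟨max ((C * T * Real.exp (2 * c3 * T)) ^ r) (S ^ r * (2 * c3) ^ (lam * r)),
    lt_max_of_lt_left (by positivity), fun N hN hNc k hk => ?_⟩
  have hN' : (0:ℝ) < N := by exact_mod_cast hN
  have hgrid : ∀ j ≤ N, (j:ℝ) * T / N ∈ Icc 0 T := fun j hj =>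
    ⟨by positivity, by rw [div_le_iff₀ hN', mul_comm T]; gcongr⟩
  have hYh : ∀ j < N, _ := fun j hj => by
    simpa only [← Nat.cast_succ] using hYhrec N hN hNc j hj
  have herr := euler_error_mul_pow_le (t := fun j : ℕ => (j:ℝ) * T / N) (Yh := Yh N) hlam0 hC.le
    hc3.le (by positivity) hNc.le hgrid (fun j => by push_cast; ring) hg
    (eq_add_integral_add_sub (continuousOn_of_abs_sub_le_mul_rpow hlam0 hg) hYeq)
    (by simp [hYh0, hY0]) (fun j hj => (hYh j hj).2.2)
    (fun j hj => mul_sub_le_of_hasDerivAt_le (convex_Ioo _ _)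
      (fun x hx => hB4deriv _ (hgrid _ hj) x hx.1 hx.2)
      (fun x hx => (hB4lt _ (hgrid _ hj) x hx.1 hx.2).le)
      (hYsand _ (hgrid _ hj)) ⟨(hYh j hj).1, (hYh j hj).2.1⟩) k hk
  have hgapk : |Y (k * T / N) - Yh N k| ≤ S := by
    cases k with
    | zero => simpa [hYh0, ← hY0] using hgap 0 h0 _ (hYsand 0 h0).1 (hYsand 0 h0).2
    | succ j => exact hgap _ (hgrid _ hk) _ (hYh j hk).1 (hYh j hk).2.1
  exact euler_error_rpow_le hc3 (by positivity) (by field_simp) hk hlam0.le (by linarith) hC.le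
    (abs_nonneg _) hgapk herr

theorem stmt_9
    (T lam : ℝ) (hT : 0 < T) (hlam : lam ∈ Set.Ioo (0:ℝ) 1)
    (phi psi : ℝ → ℝ) (K : ℝ) (hK : 0 < K)
    (hphiH : ∀ s ∈ Set.Icc (0:ℝ) T, ∀ t ∈ Set.Icc (0:ℝ) T, |phi t - phi s| ≤ K * |t - s| ^ lam)
    (hpsiH : ∀ s ∈ Set.Icc (0:ℝ) T, ∀ t ∈ Set.Icc (0:ℝ) T, |psi t - psi s| ≤ K * |t - s| ^ lam)
    (hphipsi : ∀ t ∈ Set.Icc (0:ℝ) T, phi t < psi t)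
    (b : ℝ → ℝ → ℝ) (c1 p c2 ystar gam : ℝ)
    (hc1 : 0 < c1) (hp : 1 < p) (hc2 : 0 < c2) (hystar : 0 < ystar)
    (hgam : 1 / lam - 1 < gam)
    (hB2cont : ContinuousOn (fun q : ℝ × ℝ => b q.1 q.2)
      {q : ℝ × ℝ | q.1 ∈ Set.Icc (0:ℝ) T ∧ phi q.1 < q.2 ∧ q.2 < psi q.1})
    (hB2lip : ∀ ε : ℝ, 0 < ε → ε < min 1 ((⨆ t : Set.Icc (0:ℝ) T, |psi t.1 - phi t.1|) / 2) →
      ∀ t1 ∈ Set.Icc (0:ℝ) T, ∀ t2 ∈ Set.Icc (0:ℝ) T, ∀ y1 y2 : ℝ,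
        phi t1 + ε < y1 → y1 < psi t1 - ε → phi t2 + ε < y2 → y2 < psi t2 - ε →
        |b t1 y1 - b t2 y2| ≤ c1 / ε ^ p * (|y1 - y2| + |t1 - t2| ^ lam))
    (hB3low : ∀ t ∈ Set.Icc (0:ℝ) T, ∀ y : ℝ, phi t < y → y ≤ phi t + ystar → y < psi t →
      c2 / (y - phi t) ^ gam ≤ b t y)
    (hB3up : ∀ t ∈ Set.Icc (0:ℝ) T, ∀ y : ℝ, psi t - ystar ≤ y → y < psi t → phi t < y →
      b t y ≤ -(c2 / (psi t - y) ^ gam))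
    (Y0 : ℝ) (hB1 : phi 0 < Y0 ∧ Y0 < psi 0)
    (bp : ℝ → ℝ → ℝ) (c3 : ℝ) (hc3 : 0 < c3)
    (hB4deriv : ∀ t ∈ Set.Icc (0:ℝ) T, ∀ y : ℝ, phi t < y → y < psi t →
      HasDerivAt (fun x => b t x) (bp t y) y)
    (hB4cont : ContinuousOn (fun q : ℝ × ℝ => bp q.1 q.2)
      {q : ℝ × ℝ | q.1 ∈ Set.Icc (0:ℝ) T ∧ phi q.1 < q.2 ∧ q.2 < psi q.1})
    (hB4lt : ∀ t ∈ Set.Icc (0:ℝ) T, ∀ y : ℝ, phi t < y → y < psi t → bp t y < c3)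
    (Z : ℝ → ℝ) (Lam : ℝ) (hLam : 0 < Lam) (hZ0 : Z 0 = 0)
    (hZH : ∀ s ∈ Set.Icc (0:ℝ) T, ∀ t ∈ Set.Icc (0:ℝ) T, |Z t - Z s| ≤ Lam * |t - s| ^ lam)
    (Y : ℝ → ℝ) (hYc : ContinuousOn Y (Set.Icc (0:ℝ) T))
    (hYsand : ∀ t ∈ Set.Icc (0:ℝ) T, phi t < Y t ∧ Y t < psi t)
    (hYeq : ∀ t ∈ Set.Icc (0:ℝ) T, Y t = Y0 + (∫ s in (0:ℝ)..t, b s (Y s)) + Z t)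
    (Yh : ℕ → ℕ → ℝ) (hYh0 : ∀ N : ℕ, Yh N 0 = Y0)
    (hYhrec : ∀ N : ℕ, 0 < N → c3 * (T / (N : ℝ)) < 1 → ∀ k : ℕ, k < N →
      phi (((k : ℝ) + 1) * T / (N : ℝ)) < Yh N (k + 1) ∧
      Yh N (k + 1) < psi (((k : ℝ) + 1) * T / (N : ℝ)) ∧
      Yh N (k + 1) = Yh N k + b (((k : ℝ) + 1) * T / (N : ℝ)) (Yh N (k + 1)) * (T / (N : ℝ))
        + (Z (((k : ℝ) + 1) * T / (N : ℝ)) - Z ((k : ℝ) * T / (N : ℝ))))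
    :
    ∀ r : ℝ, 1 ≤ r → ∃ C : ℝ, 0 < C ∧
      ∀ N : ℕ, 0 < N → c3 * (T / (N : ℝ)) < 1 →
        ∀ k : ℕ, k ≤ N →
          |Y ((k : ℝ) * T / (N : ℝ)) - Yh N k| ^ r ≤ C * (T / (N : ℝ)) ^ (lam * r) :=
  stmt_9_general T lam hT hlam phi psi K hphiH hpsiH b c1 p hc1 hB2cont hB2lip Y0 bp c3 hc3 hB4deriv
    hB4lt Z Lam hLam hZ0 hZH Y hYc hYsand hYeq Yh hYh0 hYhrec
end

section
/- Under Assumptions (A1)–(A4), there exist constants L1, L2 > 0, depending only on Y(0), φ, the drift b (through c1, c2, p, y_*, γ), λ and T (not on Z, Λ or N), such that for every noise path Z with Hölder constant Λ and every N with c3·Δ_N < 1, the drift-implicit Euler scheme satisfies Ŷ(t_n) ≥ φ(t_n) + L1/(L2 + Λ)^{1/(γλ+λ−1)} for all n = 0,…,N. Moreover, there exist constants L3, L4 > 0, also depending only on Y(0), φ, b, λ and T, such that for every N additionally satisfying c1·Δ_N/(Y(0) − φ(0))^p < 1 one has Ŷ(t_n) ≤ L3 + L4·Λ for all n = 0,…,N.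 -/
/-!
Write `t_k = k T / N` and `Δ = T / N`.

Lower bound. Put `c = L1 / (K + Λ) ^ (1 / (γλ + λ - 1))` and look at the last index `j ≤ n` at
which the gap `Ŷ - φ` is at least `2c`. After `j` the gap stays in `(0, 2c)` with `2c ≤ y_*`, so by
(A3) every drift value is at least `β = c2 / (2c) ^ γ`: over an elapsed time `s` the scheme gains
`β s`, while `φ` and `Z` move by at most `(K + Λ) s ^ λ`. Weighted AM-GM gives
`(K + Λ) s ^ λ ≤ c + β s` once `K + Λ ≤ β ^ λ c ^ (1 - λ)`, and this is what the choice of `L1`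
ensures (it is where `γλ + λ - 1 > 0` enters). Hence the gap never falls below `c`.

Upper bound. `G_k = Ŷ(t_k) - Z(t_k)` satisfies `G_{k+1} = G_k + b(t_{k+1}, Ŷ(t_{k+1})) Δ`.
Where `Ŷ > φ + 1`, (A4) and the mean value theorem bound the drift by a constant plus `c3 G_{k+1}`,
so `(1 - c3 Δ) G_{k+1} ≤ G_k + a Δ` for a constant `a`; elsewhere `G_{k+1} ≤ Q` for a constant `Q`.
A discrete Gronwall argument gives `G_n ≤ (1 - c3 Δ)⁻ⁿ (Q + a T)`, and `(1 - c3 Δ)⁻ᴺ` is bounded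
independently of `N` because `c3 Δ < 1` forces `N ≥ ⌊c3 T⌋ + 1`.
-/

open Real Set

theorem mul_rpow_le_add_mul {lam M β c s : ℝ} (hlam0 : 0 < lam) (hlam1 : lam < 1)
    (hβ : 0 ≤ β) (hc : 0 ≤ c) (hs : 0 ≤ s) (hM : M ≤ β ^ lam * c ^ (1 - lam)) :
    M * s ^ lam ≤ c + β * s :=
  calc M * s ^ lam ≤ β ^ lam * c ^ (1 - lam) * s ^ lam :=
        mul_le_mul_of_nonneg_right hM (rpow_nonneg hs _)
    _ = (β * s) ^ lam * c ^ (1 - lam) := by rw [mul_rpow hβ hs]; ring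
    _ ≤ lam * (β * s) + (1 - lam) * c :=
        geom_mean_le_arith_mean2_weighted hlam0.le (by linarith) (mul_nonneg hβ hs) hc (by ring)
    _ ≤ c + β * s := by nlinarith [mul_nonneg hβ hs]

theorem le_rpow_mul_rpow_of_mul_rpow_le {lam gam c2 M c : ℝ} (hc2 : 0 ≤ c2) (hc : 0 < c)
    (h : M * c ^ (gam * lam + lam - 1) ≤ (c2 / 2 ^ gam) ^ lam) :
    M ≤ (c2 / (2 * c) ^ gam) ^ lam * c ^ (1 - lam) := by
  have hsplit : (c2 / (2 * c) ^ gam) ^ lam * c ^ (1 - lam)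
      = (c2 / 2 ^ gam) ^ lam / c ^ (gam * lam + lam - 1) := by
    rw [mul_rpow zero_le_two hc.le, ← div_div, div_rpow (by positivity) (by positivity),
      ← rpow_mul hc.le, show gam * lam + lam - 1 = gam * lam - (1 - lam) by ring,
      rpow_sub hc (gam * lam) (1 - lam)]
    field_simp
  rw [hsplit, le_div_iff₀ (rpow_pos_of_pos hc _)]
  exact h

theorem sub_le_of_excursion_bound {D : ℕ → ℝ} {a c : ℝ} {N : ℕ} (hc : 0 ≤ c) (h0 : a ≤ D 0)
    (hexc : ∀ j n, j < n → n ≤ N → a ≤ D j → (∀ i, j < i → i ≤ n → D i < a) → D j - c ≤ D n) :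
    ∀ n ≤ N, a - c ≤ D n := by
  classical
  intro n hn
  set j := Nat.findGreatest (fun i : ℕ => a ≤ D i) n
  have hj : a ≤ D j := Nat.findGreatest_spec (P := fun i => a ≤ D i) (Nat.zero_le n) h0
  rcases (Nat.findGreatest_le (P := fun i : ℕ => a ≤ D i) n).lt_or_eq with hjn | hjn
  · exact (sub_le_sub_right hj c).trans <| hexc j n hjn hn hj fun i hji hin =>
      not_le.1 (Nat.findGreatest_is_greatest hji hin)
  · rw [← hjn]
    linarith

theorem add_mul_le_of_forall_add_le_succ {w : ℕ → ℝ} {a : ℝ} {j n : ℕ} (hjn : j ≤ n)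
    (h : ∀ k, j ≤ k → k < n → w k + a ≤ w (k + 1)) : w j + (n - j : ℕ) * a ≤ w n := by
  induction n, hjn using Nat.le_induction with
  | base => simp
  | succ n hjn ih =>
    have hlast := h n hjn n.lt_succ_self
    have hprev := ih fun k hjk hkn => h k hjk (by omega)
    rw [Nat.succ_sub hjn]
    push_cast
    linarith

theorem le_pow_mul_of_forall_le_or_le {g : ℕ → ℝ} {ρ Q a : ℝ} {N : ℕ} (hρ : 1 ≤ ρ) (hQ : 0 ≤ Q)
    (ha : 0 ≤ a) (h0 : g 0 ≤ Q) (hstep : ∀ k < N, g (k + 1) ≤ Q ∨ g (k + 1) ≤ ρ * (g k + a)) :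
    ∀ n ≤ N, g n ≤ ρ ^ n * (Q + n * a) := by
  intro n
  induction n with
  | zero => intro _; simpa using h0
  | succ n ih =>
    intro hn
    have hρn : 1 ≤ ρ ^ n := one_le_pow₀ hρ
    push_cast
    rcases hstep n (by omega) with h | h
    · calc g (n + 1) ≤ Q := h
        _ ≤ 1 * (Q + (n + 1) * a) := by nlinarith
        _ ≤ ρ ^ (n + 1) * (Q + (n + 1) * a) :=
          mul_le_mul_of_nonneg_right (one_le_pow₀ hρ) (by positivity)
    · calc g (n + 1) ≤ ρ * (g n + a) := h
        _ ≤ ρ * (ρ ^ n * (Q + n * a) + ρ ^ n * a) := by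
          gcongr
          · exact ih (by omega)
          · exact le_mul_of_one_le_left ha hρn
        _ = ρ ^ (n + 1) * (Q + (n + 1) * a) := by ring

theorem one_div_pow_le_exp {r : ℝ} (hr : 0 < r) (n : ℕ) :
    (1 / r) ^ n ≤ exp (n * ((1 - r) / r)) := by
  rw [exp_nat_mul]
  gcongr
  calc 1 / r = (1 - r) / r + 1 := by field_simp; ring
    _ ≤ exp ((1 - r) / r) := add_one_le_exp _

theorem le_add_mul_sub_of_hasDerivAt {f f' : ℝ → ℝ} {C R y : ℝ}
    (hf : ∀ x, R ≤ x → HasDerivAt f (f' x) x) (hf' : ∀ x, R ≤ x → f' x ≤ C) (hy : R ≤ y) :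
    f y ≤ f R + C * (y - R) := by
  have := (convex_Ici R).image_sub_le_mul_sub_of_deriv_le
    (fun x hx => (hf x hx).continuousAt.continuousWithinAt)
    (fun x hx => (hf x (interior_subset hx)).differentiableAt.differentiableWithinAt)
    (fun x hx => (hf x (interior_subset hx)).deriv ▸ hf' x (interior_subset hx))
    R self_mem_Ici y hy hy
  linarith

def HolderOnIcc (T lam C : ℝ) (f : ℝ → ℝ) : Prop :=
  ∀ s ∈ Icc (0 : ℝ) T, ∀ t ∈ Icc (0 : ℝ) T, |f t - f s| ≤ C * |t - s| ^ lam

namespace HolderOnIcc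

variable {T lam C : ℝ} {f : ℝ → ℝ}

theorem abs_sub_zero_le (hf : HolderOnIcc T lam C f) (hC : 0 ≤ C) (hlam : 0 ≤ lam) {t : ℝ}
    (ht : t ∈ Icc 0 T) : |f t - f 0| ≤ C * T ^ lam := by
  have hsub := hf 0 ⟨le_rfl, ht.1.trans ht.2⟩ t ht
  rw [sub_zero, abs_of_nonneg ht.1] at hsub
  exact hsub.trans (mul_le_mul_of_nonneg_left (rpow_le_rpow ht.1 ht.2 hlam) hC)

theorem abs_le (hf : HolderOnIcc T lam C f) (hC : 0 ≤ C) (hlam : 0 ≤ lam) {t : ℝ}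
    (ht : t ∈ Icc 0 T) : |f t| ≤ |f 0| + C * T ^ lam := by
  linarith [abs_sub_abs_le_abs_sub (f t) (f 0), hf.abs_sub_zero_le hC hlam ht]

end HolderOnIcc

noncomputable def grid (T : ℝ) (N k : ℕ) : ℝ := k * T / N

theorem grid_zero (T : ℝ) (N : ℕ) : grid T N 0 = 0 := by simp [grid]

theorem grid_mem_Icc {T : ℝ} {N k : ℕ} (hT : 0 ≤ T) (hk : k ≤ N) : grid T N k ∈ Icc 0 T := by
  refine ⟨by unfold grid; positivity, ?_⟩
  rcases N.eq_zero_or_pos with rfl | hN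
  · simp [grid, hT]
  · rw [grid, div_le_iff₀ (by exact_mod_cast hN)]
    exact mul_comm T N ▸ mul_le_mul_of_nonneg_right (by exact_mod_cast hk) hT

theorem grid_sub {T : ℝ} {N j n : ℕ} (hjn : j ≤ n) :
    grid T N n - grid T N j = (n - j : ℕ) * (T / N) := by
  rw [grid, grid, Nat.cast_sub hjn]
  ring

theorem grid_succ (T : ℝ) (N k : ℕ) : grid T N (k + 1) = ((k : ℝ) + 1) * T / N := by
  simp [grid]

def IsDriftImplicitEuler (phi : ℝ → ℝ) (b : ℝ → ℝ → ℝ) (Z : ℝ → ℝ) (T : ℝ) (N : ℕ)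
    (Y : ℕ → ℝ) : Prop :=
  ∀ k : ℕ, k < N →
    phi (((k : ℝ) + 1) * T / N) < Y (k + 1) ∧
    Y (k + 1) = Y k + b (((k : ℝ) + 1) * T / N) (Y (k + 1)) * (T / N)
      + (Z (((k : ℝ) + 1) * T / N) - Z ((k : ℝ) * T / N))

namespace IsDriftImplicitEuler

variable {phi Z : ℝ → ℝ} {b bp : ℝ → ℝ → ℝ} {T c3 Φ ζ B : ℝ} {N : ℕ} {Y : ℕ → ℝ}

theorem lt (hY : IsDriftImplicitEuler phi b Z T N Y) {k : ℕ} (hk : k < N) :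
    phi (grid T N (k + 1)) < Y (k + 1) := by
  rw [grid_succ]
  exact (hY k hk).1

theorem sub_succ (hY : IsDriftImplicitEuler phi b Z T N Y) {k : ℕ} (hk : k < N) :
    Y (k + 1) - Z (grid T N (k + 1))
      = Y k - Z (grid T N k) + b (grid T N (k + 1)) (Y (k + 1)) * (T / N) := by
  rw [grid_succ, grid]
  linear_combination (hY k hk).2

theorem add_le_of_le_rpow_mul_rpow {lam K Lam c2 ystar gam c : ℝ}
    (hY : IsDriftImplicitEuler phi b Z T N Y) (hT : 0 ≤ T) (hlam0 : 0 < lam) (hlam1 : lam < 1)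
    (hphi : HolderOnIcc T lam K phi) (hZ : HolderOnIcc T lam Lam Z) (hc2 : 0 ≤ c2) (hgam : 0 ≤ gam)
    (hA3 : ∀ t ∈ Icc (0 : ℝ) T, ∀ y : ℝ, phi t < y → y ≤ phi t + ystar →
      c2 / (y - phi t) ^ gam ≤ b t y)
    (hc : 0 < c) (hcy : 2 * c ≤ ystar) (hc0 : 2 * c ≤ Y 0 - phi 0)
    (hKL : K + Lam ≤ (c2 / (2 * c) ^ gam) ^ lam * c ^ (1 - lam)) :
    ∀ n ≤ N, phi (grid T N n) + c ≤ Y n := by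
  set β := c2 / (2 * c) ^ gam
  have hβ : 0 ≤ β := by positivity
  have hdrift : ∀ k < N, Y (k + 1) - phi (grid T N (k + 1)) < 2 * c →
      β ≤ b (grid T N (k + 1)) (Y (k + 1)) := by
    intro k hk hnear
    have hgap := sub_pos.2 (hY.lt hk)
    calc β ≤ c2 / (Y (k + 1) - phi (grid T N (k + 1))) ^ gam :=
          div_le_div_of_nonneg_left hc2 (rpow_pos_of_pos hgap _)
            (rpow_le_rpow hgap.le hnear.le hgam)
      _ ≤ b (grid T N (k + 1)) (Y (k + 1)) :=
          hA3 _ (grid_mem_Icc hT hk) _ (hY.lt hk) (by linarith)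
  have hexc := sub_le_of_excursion_bound (D := fun n => Y n - phi (grid T N n)) (N := N) hc.le
    (by simpa [grid_zero] using hc0) ?_
  · intro n hn
    have := hexc n hn
    linarith
  intro j n hjn hnN hj hbelow
  have hincr : Y j - Z (grid T N j) + (n - j : ℕ) * (β * (T / N)) ≤ Y n - Z (grid T N n) :=
    add_mul_le_of_forall_add_le_succ (w := fun k => Y k - Z (grid T N k)) hjn.le
      fun k hjk hkn => by
        simp only [hY.sub_succ (hkn.trans_le hnN)]
        gcongr
        exact hdrift k (by omega) (hbelow (k + 1) (by omega) hkn)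
  have hs : 0 ≤ grid T N n - grid T N j := by
    rw [grid_sub hjn.le]
    exact mul_nonneg (Nat.cast_nonneg _) (div_nonneg hT (Nat.cast_nonneg _))
  rw [← mul_assoc, mul_comm _ β, mul_assoc, ← grid_sub hjn.le] at hincr
  have hmemj := grid_mem_Icc (N := N) hT (hjn.le.trans hnN)
  have hmemn := grid_mem_Icc (N := N) hT hnN
  have hZs := abs_le.1 (hZ _ hmemj _ hmemn)
  have hphis := abs_le.1 (hphi _ hmemj _ hmemn)
  rw [abs_of_nonneg hs] at hZs hphis
  have hYoung := mul_rpow_le_add_mul hlam0 hlam1 hβ hc.le hs hKL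
  linarith [hZs.1, hphis.2]

theorem sub_le_or_mul_sub_le (hY : IsDriftImplicitEuler phi b Z T N Y) (hT : 0 ≤ T) (hc3 : 0 ≤ c3)
    (hphi : ∀ t ∈ Icc (0 : ℝ) T, |phi t| ≤ Φ) (hZ : ∀ t ∈ Icc (0 : ℝ) T, |Z t| ≤ ζ)
    (hB : ∀ t ∈ Icc (0 : ℝ) T, b t (phi t + 1) ≤ B)
    (hderiv : ∀ t ∈ Icc (0 : ℝ) T, ∀ y : ℝ, phi t < y → HasDerivAt (b t) (bp t y) y)
    (hbp : ∀ t ∈ Icc (0 : ℝ) T, ∀ y : ℝ, phi t < y → bp t y ≤ c3) {k : ℕ} (hk : k < N) :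
    Y (k + 1) - Z (grid T N (k + 1)) ≤ Φ + 1 + ζ ∨
      (1 - c3 * (T / N)) * (Y (k + 1) - Z (grid T N (k + 1)))
        ≤ Y k - Z (grid T N k) + (B + c3 * (Φ + ζ)) * (T / N) := by
  set t := grid T N (k + 1)
  have ht : t ∈ Icc 0 T := grid_mem_Icc hT hk
  have hphit := abs_le.1 (hphi t ht)
  have hZt := abs_le.1 (hZ t ht)
  rcases le_or_gt (Y (k + 1)) (phi t + 1) with hle | hgt
  · left
    linarith
  · right
    have hmvt := le_add_mul_sub_of_hasDerivAt (f := b t)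
      (fun x hx => hderiv t ht x (by linarith)) (fun x hx => hbp t ht x (by linarith)) hgt.le
    have hdrift : b t (Y (k + 1)) ≤ B + c3 * (Φ + ζ) + c3 * (Y (k + 1) - Z t) := by
      nlinarith [hB t ht]
    have hΔ : 0 ≤ T / N := div_nonneg hT (Nat.cast_nonneg _)
    nlinarith [hY.sub_succ hk, mul_le_mul_of_nonneg_right hdrift hΔ]

theorem le_exp_mul_add (hY : IsDriftImplicitEuler phi b Z T N Y) (hT : 0 ≤ T) (hc3 : 0 ≤ c3)
    (hphi : ∀ t ∈ Icc (0 : ℝ) T, |phi t| ≤ Φ) (hZ : ∀ t ∈ Icc (0 : ℝ) T, |Z t| ≤ ζ)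
    (hB : ∀ t ∈ Icc (0 : ℝ) T, b t (phi t + 1) ≤ B) (hB0 : 0 ≤ B)
    (hderiv : ∀ t ∈ Icc (0 : ℝ) T, ∀ y : ℝ, phi t < y → HasDerivAt (b t) (bp t y) y)
    (hbp : ∀ t ∈ Icc (0 : ℝ) T, ∀ y : ℝ, phi t < y → bp t y ≤ c3)
    {δ : ℝ} (hδ : 0 < δ) (hδN : δ ≤ 1 - c3 * (T / N)) :
    ∀ n ≤ N, Y n ≤ exp (c3 * T / δ) * (|Y 0| + Φ + 1 + ζ + (B + c3 * (Φ + ζ)) * T) + ζ := by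
  have h0T : (0 : ℝ) ∈ Icc 0 T := ⟨le_rfl, hT⟩
  have hΦ : 0 ≤ Φ := (abs_nonneg _).trans (hphi 0 h0T)
  have hζ : 0 ≤ ζ := (abs_nonneg _).trans (hZ 0 h0T)
  have hr : 0 < 1 - c3 * (T / N) := hδ.trans_le hδN
  have hΔ : 0 ≤ T / N := div_nonneg hT (Nat.cast_nonneg _)
  have hg := le_pow_mul_of_forall_le_or_le (g := fun k => Y k - Z (grid T N k)) (N := N)
    (ρ := 1 / (1 - c3 * (T / N))) (Q := |Y 0| + Φ + 1 + ζ) (a := (B + c3 * (Φ + ζ)) * (T / N))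
    (one_le_one_div hr (by nlinarith)) (by positivity) (by positivity)
    (by simp only [grid_zero]; linarith [le_abs_self (Y 0), neg_abs_le (Z 0), hZ 0 h0T])
    fun k hk => (hY.sub_le_or_mul_sub_le hT hc3 hphi hZ hB hderiv hbp hk).imp
      (fun h => by linarith [abs_nonneg (Y 0)])
      fun h => by rwa [one_div_mul_eq_div, le_div_iff₀' hr]
  intro n hn
  have hnΔ : n * (T / N) ≤ T := by
    simpa only [grid, mul_div_assoc] using (grid_mem_Icc (N := N) hT hn).2
  have hpow : (1 / (1 - c3 * (T / N))) ^ n ≤ exp (c3 * T / δ) := by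
    refine (one_div_pow_le_exp hr n).trans (exp_le_exp.2 ?_)
    rw [sub_sub_cancel, ← mul_div_assoc, mul_left_comm]
    exact div_le_div₀ (by positivity) (mul_le_mul_of_nonneg_left hnΔ hc3) hδ hδN
  have hZn := (abs_le.1 (hZ _ (grid_mem_Icc (N := N) hT hn))).2
  calc Y n = (Y n - Z (grid T N n)) + Z (grid T N n) := by ring
    _ ≤ (1 / (1 - c3 * (T / N))) ^ n * (|Y 0| + Φ + 1 + ζ + n * ((B + c3 * (Φ + ζ)) * (T / N)))
        + ζ := add_le_add (hg n hn) hZn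
    _ ≤ exp (c3 * T / δ) * (|Y 0| + Φ + 1 + ζ + (B + c3 * (Φ + ζ)) * T) + ζ := by
      gcongr ?_ * (_ + ?_) + _
      rw [mul_left_comm]
      gcongr

end IsDriftImplicitEuler

theorem exists_lower_bound {T lam K c2 ystar gam Y0 : ℝ} {phi : ℝ → ℝ} {b : ℝ → ℝ → ℝ}
    (hT : 0 ≤ T) (hlam0 : 0 < lam) (hlam1 : lam < 1) (hK : 0 < K)
    (hphi : HolderOnIcc T lam K phi) (hc2 : 0 < c2) (hystar : 0 < ystar) (hgam : 1 / lam - 1 < gam)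
    (hA3 : ∀ t ∈ Icc (0 : ℝ) T, ∀ y : ℝ, phi t < y → y ≤ phi t + ystar →
      c2 / (y - phi t) ^ gam ≤ b t y)
    (hA1 : phi 0 < Y0) :
    ∃ L1 L2 : ℝ, 0 < L1 ∧ 0 < L2 ∧ ∀ (Z : ℝ → ℝ) (Lam : ℝ), 0 ≤ Lam → HolderOnIcc T lam Lam Z →
      ∀ (N : ℕ) (Y : ℕ → ℝ), Y 0 = Y0 → IsDriftImplicitEuler phi b Z T N Y →
        ∀ n ≤ N, phi (grid T N n) + L1 / (L2 + Lam) ^ (1 / (gam * lam + lam - 1)) ≤ Y n := by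
  have hκ : 0 < gam * lam + lam - 1 := by
    have := mul_lt_mul_of_pos_right hgam hlam0
    rw [sub_mul, one_div_mul_cancel hlam0.ne'] at this
    linarith
  have hgam0 : 0 ≤ gam := by linarith [one_lt_one_div hlam0 hlam1]
  set κ := gam * lam + lam - 1
  set A := (c2 / 2 ^ gam) ^ lam
  set u := min ystar (Y0 - phi 0)
  have hu : 0 < u := lt_min hystar (sub_pos.2 hA1 : (0 : ℝ) < Y0 - phi 0)
  set L1 := min (A ^ (1 / κ)) (u / 2 * K ^ (1 / κ))
  have hL1 : 0 < L1 := lt_min (by positivity) (by positivity)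
  refine ⟨L1, K, hL1, hK, fun Z Lam hLam hZ N Y hY0 hY => ?_⟩
  set M := K + Lam
  have hM : 0 < M := by positivity
  set c := L1 / M ^ (1 / κ)
  have hc : 0 < c := by positivity
  have h2c : 2 * c ≤ u := by
    have hKM : K ^ (1 / κ) / M ^ (1 / κ) ≤ 1 :=
      div_le_one_of_le₀ (rpow_le_rpow hK.le (by linarith) (by positivity)) (by positivity)
    calc 2 * c ≤ 2 * (u / 2 * K ^ (1 / κ) / M ^ (1 / κ)) := by
          gcongr
          exact div_le_div_of_nonneg_right (min_le_right _ _) (by positivity)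
      _ = u * (K ^ (1 / κ) / M ^ (1 / κ)) := by ring
      _ ≤ u := mul_le_of_le_one_right hu.le hKM
  have hMc : M * c ^ κ = L1 ^ κ := by
    rw [div_rpow hL1.le (by positivity), ← rpow_mul hM.le, one_div_mul_cancel hκ.ne', rpow_one]
    field_simp
  have hL1A : L1 ^ κ ≤ A := by
    calc L1 ^ κ ≤ (A ^ (1 / κ)) ^ κ := rpow_le_rpow hL1.le (min_le_left _ _) hκ.le
      _ = A := by rw [← rpow_mul (by positivity), one_div_mul_cancel hκ.ne', rpow_one]
  exact hY.add_le_of_le_rpow_mul_rpow hT hlam0 hlam1 hphi hZ hc2.le hgam0 hA3 hc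
    (h2c.trans (min_le_left _ _)) (hY0 ▸ h2c.trans (min_le_right _ _))
    (le_rpow_mul_rpow_of_mul_rpow_le hc2.le hc (hMc ▸ hL1A))

theorem drift_above_boundary_le {T lam K c1 p : ℝ} {phi : ℝ → ℝ} {b : ℝ → ℝ → ℝ}
    (hlam : 0 ≤ lam) (hK : 0 ≤ K) (hphi : HolderOnIcc T lam K phi) (hc1 : 0 ≤ c1)
    (hA2lip : ∀ ε : ℝ, 0 < ε → ε < 1 →
      ∀ t1 ∈ Icc (0 : ℝ) T, ∀ t2 ∈ Icc (0 : ℝ) T, ∀ y1 y2 : ℝ,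
        phi t1 + ε < y1 → phi t2 + ε < y2 →
        |b t1 y1 - b t2 y2| ≤ c1 / ε ^ p * (|y1 - y2| + |t1 - t2| ^ lam))
    {t : ℝ} (ht : t ∈ Icc 0 T) :
    b t (phi t + 1) ≤ |b 0 (phi 0 + 1)| + c1 / (1 / 2) ^ p * ((K + 1) * T ^ lam) := by
  have h0T : (0 : ℝ) ∈ Icc 0 T := ⟨le_rfl, ht.1.trans ht.2⟩
  have hlip := hA2lip (1 / 2) (by norm_num) (by norm_num) t ht 0 h0T (phi t + 1) (phi 0 + 1)
    (by linarith) (by linarith)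
  have hdist : |phi t + 1 - (phi 0 + 1)| + |t - 0| ^ lam ≤ (K + 1) * T ^ lam := by
    rw [add_sub_add_right_eq_sub, sub_zero, abs_of_nonneg ht.1, add_one_mul]
    exact add_le_add (hphi.abs_sub_zero_le hK hlam ht) (rpow_le_rpow ht.1 ht.2 hlam)
  have := hlip.trans (mul_le_mul_of_nonneg_left hdist (by positivity))
  linarith [le_abs_self (b t (phi t + 1) - b 0 (phi 0 + 1)), le_abs_self (b 0 (phi 0 + 1))]

theorem exists_upper_bound {T lam K c1 p Y0 c3 : ℝ} {phi : ℝ → ℝ} {b bp : ℝ → ℝ → ℝ}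
    (hT : 0 < T) (hlam : 0 ≤ lam) (hK : 0 ≤ K) (hphi : HolderOnIcc T lam K phi) (hc1 : 0 ≤ c1)
    (hA2lip : ∀ ε : ℝ, 0 < ε → ε < 1 →
      ∀ t1 ∈ Icc (0 : ℝ) T, ∀ t2 ∈ Icc (0 : ℝ) T, ∀ y1 y2 : ℝ,
        phi t1 + ε < y1 → phi t2 + ε < y2 →
        |b t1 y1 - b t2 y2| ≤ c1 / ε ^ p * (|y1 - y2| + |t1 - t2| ^ lam))
    (hc3 : 0 ≤ c3)
    (hderiv : ∀ t ∈ Icc (0 : ℝ) T, ∀ y : ℝ, phi t < y → HasDerivAt (b t) (bp t y) y)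
    (hbp : ∀ t ∈ Icc (0 : ℝ) T, ∀ y : ℝ, phi t < y → bp t y ≤ c3) :
    ∃ L3 L4 : ℝ, 0 < L3 ∧ 0 < L4 ∧ ∀ (Z : ℝ → ℝ) (Lam : ℝ), 0 ≤ Lam → Z 0 = 0 →
      HolderOnIcc T lam Lam Z → ∀ N : ℕ, 0 < N → c3 * (T / N) < 1 →
      ∀ Y : ℕ → ℝ, Y 0 = Y0 → IsDriftImplicitEuler phi b Z T N Y →
        ∀ n ≤ N, Y n ≤ L3 + L4 * Lam := by
  set B := |b 0 (phi 0 + 1)| + c1 / (1 / 2) ^ p * ((K + 1) * T ^ lam)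
  set Φ := |phi 0| + K * T ^ lam
  -- `1 - c3 * T / (⌊c3 * T⌋₊ + 1)` is the smallest value of `1 - c3 * (T / N)` over `N > c3 * T`
  set δ := 1 - c3 * T / (⌊c3 * T⌋₊ + 1)
  have hδ : 0 < δ := sub_pos.2 ((div_lt_one (by positivity)).2 (Nat.lt_floor_add_one _))
  set E := exp (c3 * T / δ)
  refine ⟨E * (|Y0| + Φ + 1 + (B + c3 * Φ) * T), E * (T ^ lam + c3 * T ^ lam * T) + T ^ lam,
    by positivity, by positivity, fun Z Lam hLam hZ0 hZ N hN hc3N Y hY0 hY n hn => ?_⟩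
  have hδN : δ ≤ 1 - c3 * (T / N) := by
    have hfloor : (⌊c3 * T⌋₊ : ℝ) + 1 ≤ N := by
      have : c3 * T < N := by rwa [← mul_div_assoc, div_lt_one (by positivity)] at hc3N
      exact_mod_cast Nat.floor_lt (by positivity) |>.2 this
    rw [← mul_div_assoc]
    exact sub_le_sub_left (div_le_div_of_nonneg_left (by positivity) (by positivity) hfloor) 1
  have hbound := hY.le_exp_mul_add hT.le hc3 (Φ := Φ) (ζ := Lam * T ^ lam)
    (fun t ht => hphi.abs_le hK hlam ht)
    (fun t ht => by simpa [hZ0] using hZ.abs_le hLam hlam ht)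
    (fun t ht => drift_above_boundary_le hlam hK hphi hc1 hA2lip ht) (by positivity)
    hderiv hbp hδ hδN n hn
  rw [hY0] at hbound
  exact hbound.trans_eq (by ring)

theorem stmt_13_general
    (T lam : ℝ) (hT : 0 < T) (hlam : lam ∈ Set.Ioo (0:ℝ) 1)
    (phi : ℝ → ℝ) (K : ℝ) (hK : 0 < K)
    (hphiH : ∀ s ∈ Set.Icc (0:ℝ) T, ∀ t ∈ Set.Icc (0:ℝ) T, |phi t - phi s| ≤ K * |t - s| ^ lam)
    (b : ℝ → ℝ → ℝ) (c1 p c2 ystar gam : ℝ)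
    (hc1 : 0 < c1) (hc2 : 0 < c2) (hystar : 0 < ystar)
    (hgam : 1 / lam - 1 < gam)
    (hA2lip : ∀ ε : ℝ, 0 < ε → ε < 1 →
      ∀ t1 ∈ Set.Icc (0:ℝ) T, ∀ t2 ∈ Set.Icc (0:ℝ) T, ∀ y1 y2 : ℝ,
        phi t1 + ε < y1 → phi t2 + ε < y2 →
        |b t1 y1 - b t2 y2| ≤ c1 / ε ^ p * (|y1 - y2| + |t1 - t2| ^ lam))
    (hA3 : ∀ t ∈ Set.Icc (0:ℝ) T, ∀ y : ℝ, phi t < y → y ≤ phi t + ystar →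
      c2 / (y - phi t) ^ gam ≤ b t y)
    (Y0 : ℝ) (hA1 : phi 0 < Y0)
    (bp : ℝ → ℝ → ℝ) (c3 : ℝ) (hc3 : 0 < c3)
    (hA4deriv : ∀ t ∈ Set.Icc (0:ℝ) T, ∀ y : ℝ, phi t < y →
      HasDerivAt (fun x => b t x) (bp t y) y)
    (hA4lt : ∀ t ∈ Set.Icc (0:ℝ) T, ∀ y : ℝ, phi t < y → bp t y < c3)
    :
    (∃ L1 L2 : ℝ, 0 < L1 ∧ 0 < L2 ∧
      ∀ (Z : ℝ → ℝ) (Lam : ℝ), 0 < Lam → Z 0 = 0 →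
        (∀ s ∈ Set.Icc (0:ℝ) T, ∀ t ∈ Set.Icc (0:ℝ) T, |Z t - Z s| ≤ Lam * |t - s| ^ lam) →
        ∀ N : ℕ, 0 < N → c3 * (T / (N : ℝ)) < 1 →
        ∀ Yh : ℕ → ℝ, Yh 0 = Y0 →
          (∀ k : ℕ, k < N →
            phi (((k : ℝ) + 1) * T / (N : ℝ)) < Yh (k + 1) ∧
            Yh (k + 1) = Yh k + b (((k : ℝ) + 1) * T / (N : ℝ)) (Yh (k + 1)) * (T / (N : ℝ))
              + (Z (((k : ℝ) + 1) * T / (N : ℝ)) - Z ((k : ℝ) * T / (N : ℝ)))) →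
          ∀ n : ℕ, n ≤ N →
            phi ((n : ℝ) * T / (N : ℝ)) + L1 / (L2 + Lam) ^ (1 / (gam * lam + lam - 1)) ≤ Yh n) ∧
    (∃ L3 L4 : ℝ, 0 < L3 ∧ 0 < L4 ∧
      ∀ (Z : ℝ → ℝ) (Lam : ℝ), 0 < Lam → Z 0 = 0 →
        (∀ s ∈ Set.Icc (0:ℝ) T, ∀ t ∈ Set.Icc (0:ℝ) T, |Z t - Z s| ≤ Lam * |t - s| ^ lam) →
        ∀ N : ℕ, 0 < N → c3 * (T / (N : ℝ)) < 1 → c1 * (T / (N : ℝ)) / (Y0 - phi 0) ^ p < 1 →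
        ∀ Yh : ℕ → ℝ, Yh 0 = Y0 →
          (∀ k : ℕ, k < N →
            phi (((k : ℝ) + 1) * T / (N : ℝ)) < Yh (k + 1) ∧
            Yh (k + 1) = Yh k + b (((k : ℝ) + 1) * T / (N : ℝ)) (Yh (k + 1)) * (T / (N : ℝ))
              + (Z (((k : ℝ) + 1) * T / (N : ℝ)) - Z ((k : ℝ) * T / (N : ℝ)))) →
          ∀ n : ℕ, n ≤ N → Yh n ≤ L3 + L4 * Lam) := by
  obtain ⟨hlam0, hlam1⟩ := hlam
  refine ⟨?_, ?_⟩
  · obtain ⟨L1, L2, hL1, hL2, hlower⟩ :=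
      exists_lower_bound hT.le hlam0 hlam1 hK hphiH hc2 hystar hgam hA3 hA1
    exact ⟨L1, L2, hL1, hL2, fun Z Lam hLam _ hZ N _ _ Y hY0 hY =>
      hlower Z Lam hLam.le hZ N Y hY0 hY⟩
  · obtain ⟨L3, L4, hL3, hL4, hupper⟩ := exists_upper_bound hT hlam0.le hK.le hphiH hc1.le hA2lip
      hc3.le hA4deriv fun t ht y hy => (hA4lt t ht y hy).le
    exact ⟨L3, L4, hL3, hL4, fun Z Lam hLam hZ0 hZ N hN hc3N _ Y hY0 hY =>
      hupper Z Lam hLam.le hZ0 hZ N hN hc3N Y hY0 hY⟩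

theorem stmt_13
    (T lam : ℝ) (hT : 0 < T) (hlam : lam ∈ Set.Ioo (0:ℝ) 1)
    (phi : ℝ → ℝ) (K : ℝ) (hK : 0 < K)
    (hphiH : ∀ s ∈ Set.Icc (0:ℝ) T, ∀ t ∈ Set.Icc (0:ℝ) T, |phi t - phi s| ≤ K * |t - s| ^ lam)
    (b : ℝ → ℝ → ℝ) (c1 p c2 ystar gam : ℝ)
    (hc1 : 0 < c1) (hp : 1 < p) (hc2 : 0 < c2) (hystar : 0 < ystar)
    (hgam : 1 / lam - 1 < gam)
    (hA2cont : ContinuousOn (fun q : ℝ × ℝ => b q.1 q.2)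
      {q : ℝ × ℝ | q.1 ∈ Set.Icc (0:ℝ) T ∧ phi q.1 < q.2})
    (hA2lip : ∀ ε : ℝ, 0 < ε → ε < 1 →
      ∀ t1 ∈ Set.Icc (0:ℝ) T, ∀ t2 ∈ Set.Icc (0:ℝ) T, ∀ y1 y2 : ℝ,
        phi t1 + ε < y1 → phi t2 + ε < y2 →
        |b t1 y1 - b t2 y2| ≤ c1 / ε ^ p * (|y1 - y2| + |t1 - t2| ^ lam))
    (hA3 : ∀ t ∈ Set.Icc (0:ℝ) T, ∀ y : ℝ, phi t < y → y ≤ phi t + ystar →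
      c2 / (y - phi t) ^ gam ≤ b t y)
    (Y0 : ℝ) (hA1 : phi 0 < Y0)
    (bp : ℝ → ℝ → ℝ) (c3 : ℝ) (hc3 : 0 < c3)
    (hA4deriv : ∀ t ∈ Set.Icc (0:ℝ) T, ∀ y : ℝ, phi t < y →
      HasDerivAt (fun x => b t x) (bp t y) y)
    (hA4cont : ContinuousOn (fun q : ℝ × ℝ => bp q.1 q.2)
      {q : ℝ × ℝ | q.1 ∈ Set.Icc (0:ℝ) T ∧ phi q.1 < q.2})
    (hA4lt : ∀ t ∈ Set.Icc (0:ℝ) T, ∀ y : ℝ, phi t < y → bp t y < c3)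
    :
    (∃ L1 L2 : ℝ, 0 < L1 ∧ 0 < L2 ∧
      ∀ (Z : ℝ → ℝ) (Lam : ℝ), 0 < Lam → Z 0 = 0 →
        (∀ s ∈ Set.Icc (0:ℝ) T, ∀ t ∈ Set.Icc (0:ℝ) T, |Z t - Z s| ≤ Lam * |t - s| ^ lam) →
        ∀ N : ℕ, 0 < N → c3 * (T / (N : ℝ)) < 1 →
        ∀ Yh : ℕ → ℝ, Yh 0 = Y0 →
          (∀ k : ℕ, k < N →
            phi (((k : ℝ) + 1) * T / (N : ℝ)) < Yh (k + 1) ∧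
            Yh (k + 1) = Yh k + b (((k : ℝ) + 1) * T / (N : ℝ)) (Yh (k + 1)) * (T / (N : ℝ))
              + (Z (((k : ℝ) + 1) * T / (N : ℝ)) - Z ((k : ℝ) * T / (N : ℝ)))) →
          ∀ n : ℕ, n ≤ N →
            phi ((n : ℝ) * T / (N : ℝ)) + L1 / (L2 + Lam) ^ (1 / (gam * lam + lam - 1)) ≤ Yh n) ∧
    (∃ L3 L4 : ℝ, 0 < L3 ∧ 0 < L4 ∧
      ∀ (Z : ℝ → ℝ) (Lam : ℝ), 0 < Lam → Z 0 = 0 →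
        (∀ s ∈ Set.Icc (0:ℝ) T, ∀ t ∈ Set.Icc (0:ℝ) T, |Z t - Z s| ≤ Lam * |t - s| ^ lam) →
        ∀ N : ℕ, 0 < N → c3 * (T / (N : ℝ)) < 1 → c1 * (T / (N : ℝ)) / (Y0 - phi 0) ^ p < 1 →
        ∀ Yh : ℕ → ℝ, Yh 0 = Y0 →
          (∀ k : ℕ, k < N →
            phi (((k : ℝ) + 1) * T / (N : ℝ)) < Yh (k + 1) ∧
            Yh (k + 1) = Yh k + b (((k : ℝ) + 1) * T / (N : ℝ)) (Yh (k + 1)) * (T / (N : ℝ))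
              + (Z (((k : ℝ) + 1) * T / (N : ℝ)) - Z ((k : ℝ) * T / (N : ℝ)))) →
          ∀ n : ℕ, n ≤ N → Yh n ≤ L3 + L4 * Lam) :=
  stmt_13_general T lam hT hlam phi K hK hphiH b c1 p c2 ystar gam hc1 hc2 hystar hgam hA2lip hA3 Y0
    hA1 bp c3 hc3 hA4deriv hA4lt
end
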